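/- arXiv:1302.2189 — 7 statements merged into one kernel-verified Lean document; each statement's English description precedes it below -/
import Mathlib

section
/- The Jacobi group Γ^J is generated by the two elements S and T. -/
open Matrix

abbrev SL2Z := Matrix.SpecialLinearGroup (Fin 2) ℤ

/-- The Jacobi group `SL₂(ℤ) ⋉ ℤ²`: pairs `[M,(λ,μ)]`. -/
@[ext]
structure GammaJ where
  M : SL2Z
  X : Fin 2 → ℤ

namespace GammaJ

instance : Mul GammaJ :=
  ⟨fun g h => ⟨g.M * h.M, Matrix.vecMul g.X (h.M : Matrix (Fin 2) (Fin 2) ℤ) + h.X⟩⟩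

instance : One GammaJ := ⟨⟨1, 0⟩⟩

instance : Inv GammaJ :=
  ⟨fun g => ⟨g.M⁻¹, -(Matrix.vecMul g.X ((g.M⁻¹ : SL2Z) : Matrix (Fin 2) (Fin 2) ℤ))⟩⟩

@[simp] lemma mul_M (g h : GammaJ) : (g * h).M = g.M * h.M := rfl
@[simp] lemma mul_X (g h : GammaJ) :
    (g * h).X = Matrix.vecMul g.X (h.M : Matrix (Fin 2) (Fin 2) ℤ) + h.X := rfl
@[simp] lemma one_M : (1 : GammaJ).M = 1 := rfl
@[simp] lemma one_X : (1 : GammaJ).X = 0 := rfl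
@[simp] lemma inv_M (g : GammaJ) : g⁻¹.M = g.M⁻¹ := rfl
@[simp] lemma inv_X (g : GammaJ) :
    g⁻¹.X = -(Matrix.vecMul g.X ((g.M⁻¹ : SL2Z) : Matrix (Fin 2) (Fin 2) ℤ)) := rfl

instance : Group GammaJ where
  mul_assoc a b c := by
    ext : 1
    · exact mul_assoc a.M b.M c.M
    · show Matrix.vecMul (Matrix.vecMul a.X _ + b.X) _ + c.X
        = Matrix.vecMul a.X ((b.M * c.M : SL2Z) : Matrix (Fin 2) (Fin 2) ℤ) + _
      simp [Matrix.add_vecMul, Matrix.vecMul_vecMul, add_assoc]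
  one_mul a := by
    ext : 1
    · exact one_mul a.M
    · simp
  mul_one a := by
    ext : 1
    · exact mul_one a.M
    · simp
  inv_mul_cancel a := by
    ext : 1
    · exact inv_mul_cancel a.M
    · show Matrix.vecMul (-(Matrix.vecMul a.X _)) _ + a.X = 0
      simp [Matrix.neg_vecMul, Matrix.vecMul_vecMul, Matrix.adjugate_mul,
        Matrix.SpecialLinearGroup.det_coe]

def S : GammaJ := ⟨⟨!![1, 1; 0, 1], by norm_num [Matrix.det_fin_two_of]⟩, ![0, 0]⟩
def T : GammaJ := ⟨⟨!![0, -1; 1, 0], by norm_num [Matrix.det_fin_two_of]⟩, ![1, 0]⟩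
def U : GammaJ := ⟨⟨!![1, -1; 1, 0], by norm_num [Matrix.det_fin_two_of]⟩, ![1, 0]⟩
def E : GammaJ := 1
def I₁ : GammaJ := ⟨1, ![0, 1]⟩
def I₂ : GammaJ := ⟨1, ![1, 0]⟩

end GammaJ

/-- Auxiliary: `ModularGroup.S` and `ModularGroup.T` generate `SL(2, ℤ)`. -/
lemma SL2_mem_aux (K : Subgroup SL2Z) (hS : ModularGroup.S ∈ K) (hT : ModularGroup.T ∈ K)
    (M : SL2Z) : M ∈ K := by
  suffices h : ∀ n (M : SL2Z), (M 1 0).natAbs = n → M ∈ K from h _ M rfl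
  intro n
  induction n using Nat.strong_induction_on with
  | _ n ih =>
    intro M hn
    have hdet : M 0 0 * M 1 1 - M 0 1 * M 1 0 = 1 := by
      have := M.2
      rwa [Matrix.det_fin_two] at this
    by_cases hc : M 1 0 = 0
    · rw [hc, mul_zero, sub_zero] at hdet
      rcases Int.mul_eq_one_iff_eq_one_or_neg_one.mp hdet with ⟨ha, hd⟩ | ⟨ha, hd⟩
      · have hM : M = ModularGroup.T ^ (M 0 1) := by
          apply Subtype.coe_injective
          show (M : Matrix (Fin 2) (Fin 2) ℤ) = ((ModularGroup.T ^ (M 0 1) : SL2Z) : Matrix (Fin 2) (Fin 2) ℤ)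
          rw [ModularGroup.coe_T_zpow, Matrix.eta_fin_two (M : Matrix (Fin 2) (Fin 2) ℤ)]
          rw [show ((M : Matrix (Fin 2) (Fin 2) ℤ)) 0 0 = M 0 0 from rfl, ha, hd, hc]
          simp
        rw [hM]; exact K.zpow_mem hT _
      · have hM : M = ModularGroup.S * ModularGroup.S * ModularGroup.T ^ (-(M 0 1)) := by
          apply Subtype.coe_injective
          show (M : Matrix (Fin 2) (Fin 2) ℤ) = ((ModularGroup.S * ModularGroup.S * ModularGroup.T ^ (-(M 0 1)) : SL2Z) : Matrix (Fin 2) (Fin 2) ℤ)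
          rw [Matrix.SpecialLinearGroup.coe_mul, Matrix.SpecialLinearGroup.coe_mul,
            ModularGroup.S_mul_S_eq, ModularGroup.coe_T_zpow,
            Matrix.eta_fin_two (M : Matrix (Fin 2) (Fin 2) ℤ), ha, hd, hc]
          ext i j
          fin_cases i <;> fin_cases j <;> simp
        rw [hM]
        exact K.mul_mem (K.mul_mem hS hS) (K.zpow_mem hT _)
    · set c := M 1 0 with hc'
      set q : ℤ := -(M 0 0 / c) with hq
      have key : (ModularGroup.S * ModularGroup.T ^ q * M) 1 0 = M 0 0 % c := by
        have : (ModularGroup.S * ModularGroup.T ^ q * M) 1 0 = M 0 0 + q * M 1 0 := by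
          simp [Matrix.SpecialLinearGroup.coe_mul, ModularGroup.coe_S, ModularGroup.coe_T_zpow,
            Matrix.mul_apply, Fin.sum_univ_two]
        rw [this, hq, Int.emod_def]
        ring
      have hlt : ((ModularGroup.S * ModularGroup.T ^ q * M) 1 0).natAbs < n := by
        rw [key, ← hn]
        have h1 : 0 ≤ M 0 0 % c := Int.emod_nonneg _ hc
        have h2 : M 0 0 % c < |c| := by rw [Int.abs_eq_natAbs]; exact Int.emod_lt _ hc
        rw [Int.abs_eq_natAbs] at h2
        omega
      have hmem := ih _ hlt _ rfl
      have hMeq : M = (ModularGroup.S * ModularGroup.T ^ q)⁻¹ *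
          (ModularGroup.S * ModularGroup.T ^ q * M) := by group
      rw [hMeq]
      exact K.mul_mem (K.inv_mem (K.mul_mem hS (K.zpow_mem hT _))) hmem

namespace GammaJ

lemma trans_mul (X Y : Fin 2 → ℤ) : (⟨1, X⟩ : GammaJ) * ⟨1, Y⟩ = ⟨1, X + Y⟩ := by
  ext : 1
  · exact one_mul 1
  · show Matrix.vecMul X ((1 : SL2Z) : Matrix (Fin 2) (Fin 2) ℤ) + Y = X + Y
    simp

lemma trans_zpow (X : Fin 2 → ℤ) (n : ℤ) : (⟨1, X⟩ : GammaJ) ^ n = ⟨1, n • X⟩ := by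
  induction n using Int.induction_on with
  | zero => ext : 1 <;> simp
  | succ k h => rw [_root_.zpow_add, zpow_one, h, trans_mul]; congr 1; module
  | pred k h => rw [_root_.zpow_sub, zpow_one, h]
                rw [show (⟨1, X⟩ : GammaJ)⁻¹ = ⟨1, -X⟩ by ext : 1 <;> simp [Matrix.neg_vecMul]]
                rw [show (⟨1, ((-k : ℤ)) • X⟩ : GammaJ) * ⟨1, -X⟩ = ⟨1, (-k : ℤ) • X + -X⟩ from trans_mul _ _]
                congr 1; module

end GammaJ

/-- The Jacobi group `Γ^J` is generated by the two elements `S` and `T`. -/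
theorem GammaJ.closure_S_T_eq_top :
    Subgroup.closure ({GammaJ.S, GammaJ.T} : Set GammaJ) = ⊤ := by
  set H := Subgroup.closure ({GammaJ.S, GammaJ.T} : Set GammaJ) with hH
  have hS : GammaJ.S ∈ H := Subgroup.subset_closure (Set.mem_insert _ _)
  have hT : GammaJ.T ∈ H := Subgroup.subset_closure (Set.mem_insert_of_mem _ rfl)
  -- the word w = S T S T S T T T equals the translation ⟨1, (-1,1)⟩
  have hw_eq : GammaJ.S * GammaJ.T * GammaJ.S * GammaJ.T * GammaJ.S * GammaJ.T * GammaJ.T * GammaJ.T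
      = (⟨1, ![-1, 1]⟩ : GammaJ) := by
    ext : 1
    · exact Subtype.ext (by decide)
    · decide
  have hw : (⟨1, ![-1, 1]⟩ : GammaJ) ∈ H := by
    rw [← hw_eq]
    exact H.mul_mem (H.mul_mem (H.mul_mem (H.mul_mem (H.mul_mem (H.mul_mem (H.mul_mem hS hT) hS) hT) hS) hT) hT) hT
  -- x = ⟨1,(0,-1)⟩ ∈ H from the relation  w * S = (S * w) * x
  have hx_eq : (⟨1, ![-1, 1]⟩ : GammaJ) * GammaJ.S
      = (GammaJ.S * (⟨1, ![-1, 1]⟩ : GammaJ)) * (⟨1, ![0, -1]⟩ : GammaJ) := by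
    ext : 1
    · exact Subtype.ext (by decide)
    · decide
  have hx : (⟨1, ![0, -1]⟩ : GammaJ) ∈ H := by
    have : (⟨1, ![0, -1]⟩ : GammaJ)
        = (GammaJ.S * (⟨1, ![-1, 1]⟩ : GammaJ))⁻¹ * ((⟨1, ![-1, 1]⟩ : GammaJ) * GammaJ.S) := by
      rw [hx_eq, inv_mul_cancel_left]
    rw [this]
    exact H.mul_mem (H.inv_mem (H.mul_mem hS hw)) (H.mul_mem hw hS)
  have hI1 : (⟨1, ![0, 1]⟩ : GammaJ) ∈ H := by
    have : (⟨1, ![0, 1]⟩ : GammaJ) = (⟨1, ![0, -1]⟩ : GammaJ)⁻¹ := by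
      apply eq_inv_of_mul_eq_one_left
      ext : 1
      · exact Subtype.ext (by decide)
      · decide
    rw [this]; exact H.inv_mem hx
  have hI2 : (⟨1, ![1, 0]⟩ : GammaJ) ∈ H := by
    have heq : (⟨1, ![0, 1]⟩ : GammaJ) * GammaJ.T = GammaJ.T * (⟨1, ![1, 0]⟩ : GammaJ) := by
      ext : 1
      · exact Subtype.ext (by decide)
      · decide
    have : (⟨1, ![1, 0]⟩ : GammaJ) = GammaJ.T⁻¹ * ((⟨1, ![0, 1]⟩ : GammaJ) * GammaJ.T) := by
      rw [heq, inv_mul_cancel_left]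
    rw [this]
    exact H.mul_mem (H.inv_mem hT) (H.mul_mem hI1 hT)
  -- all translations are in H
  have htrans : ∀ X : Fin 2 → ℤ, (⟨1, X⟩ : GammaJ) ∈ H := by
    intro X
    have : (⟨1, X⟩ : GammaJ) = (⟨1, ![1, 0]⟩ : GammaJ) ^ (X 0) * (⟨1, ![0, 1]⟩ : GammaJ) ^ (X 1) := by
      rw [GammaJ.trans_zpow, GammaJ.trans_zpow, GammaJ.trans_mul]
      congr 1
      funext i
      fin_cases i <;> simp
    rw [this]
    exact H.mul_mem (H.zpow_mem hI2 _) (H.zpow_mem hI1 _)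
  -- pure matrix elements are in H
  have hmat : ∀ M : SL2Z, (⟨M, 0⟩ : GammaJ) ∈ H := by
    set K : Subgroup SL2Z :=
      { carrier := {M | (⟨M, 0⟩ : GammaJ) ∈ H}
        one_mem' := by
          show (⟨1, 0⟩ : GammaJ) ∈ H
          exact one_mem H
        mul_mem' := by
          intro a b ha hb
          show (⟨a * b, 0⟩ : GammaJ) ∈ H
          have : (⟨a * b, 0⟩ : GammaJ) = (⟨a, 0⟩ : GammaJ) * ⟨b, 0⟩ := by
            ext : 1
            · rfl
            · show (0 : Fin 2 → ℤ) = Matrix.vecMul 0 _ + 0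
              simp
          rw [this]; exact H.mul_mem ha hb
        inv_mem' := by
          intro a ha
          show (⟨a⁻¹, 0⟩ : GammaJ) ∈ H
          have : (⟨a⁻¹, 0⟩ : GammaJ) = (⟨a, 0⟩ : GammaJ)⁻¹ := by
            ext : 1
            · rfl
            · show (0 : Fin 2 → ℤ) = -(Matrix.vecMul 0 _)
              simp
          rw [this]; exact H.inv_mem ha } with hK
    have hTK : ModularGroup.T ∈ K := by
      show (⟨ModularGroup.T, 0⟩ : GammaJ) ∈ H
      have : (⟨ModularGroup.T, 0⟩ : GammaJ) = GammaJ.S := by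
        ext : 1
        · exact Subtype.ext (by decide)
        · decide
      rw [this]; exact hS
    have hSK : ModularGroup.S ∈ K := by
      show (⟨ModularGroup.S, 0⟩ : GammaJ) ∈ H
      have : (⟨ModularGroup.S, 0⟩ : GammaJ) = GammaJ.T * ⟨1, ![-1, 0]⟩ := by
        ext : 1
        · exact Subtype.ext (by decide)
        · decide
      rw [this]
      exact H.mul_mem hT (htrans _)
    intro M
    exact SL2_mem_aux K hSK hTK M
  rw [eq_top_iff]
  intro g _
  have : g = (⟨g.M, 0⟩ : GammaJ) * ⟨1, g.X⟩ := by
    ext : 1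
    · exact (mul_one g.M).symm
    · show g.X = Matrix.vecMul 0 _ + g.X
      simp
  rw [this]
  exact H.mul_mem (hmat g.M) (htrans g.X)
end

section
/- The Jacobi group Γ^J is generated by the two elements T and U. -/
open Matrix

namespace GammaJ

/-! ### Auxiliary: SL₂(ℤ) is generated by `s = [[1,1],[0,1]]` and `t = [[0,-1],[1,0]]` -/

def s : SL2Z := ⟨!![1, 1; 0, 1], by norm_num [Matrix.det_fin_two_of]⟩
def t : SL2Z := ⟨!![0, -1; 1, 0], by norm_num [Matrix.det_fin_two_of]⟩

lemma s_zpow (n : ℤ) : ((s ^ n : SL2Z) : Matrix (Fin 2) (Fin 2) ℤ) = !![1, n; 0, 1] := by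
  induction n using Int.induction_on with
  | zero => simp [Matrix.one_fin_two]
  | succ k ih =>
      rw [_root_.zpow_add_one, Matrix.SpecialLinearGroup.coe_mul, ih]
      show _ = !![(1:ℤ), (k:ℤ)+1; 0, 1]
      simp [s, Matrix.mul_fin_two, add_comm]
  | pred k ih =>
      rw [_root_.zpow_sub_one, Matrix.SpecialLinearGroup.coe_mul, ih]
      have hsinv : ((s⁻¹ : SL2Z) : Matrix (Fin 2) (Fin 2) ℤ) = !![1, -1; 0, 1] := by
        rw [Matrix.SpecialLinearGroup.coe_inv]
        simp [s, Matrix.adjugate_fin_two]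
      rw [hsinv]
      show _ = !![(1:ℤ), (-(k:ℤ))-1; 0, 1]
      simp [Matrix.mul_fin_two]
      ring

lemma sl2_mem_closure (A : SL2Z) : A ∈ Subgroup.closure ({s, t} : Set SL2Z) := by
  set C := Subgroup.closure ({s, t} : Set SL2Z) with hC
  have hs : s ∈ C := Subgroup.subset_closure (by simp)
  have ht : t ∈ C := Subgroup.subset_closure (by simp)
  suffices h : ∀ n : ℕ, ∀ A : SL2Z, (A.1 1 0).natAbs = n → A ∈ C by
    exact h _ A rfl
  intro n
  induction n using Nat.strong_induction_on with
  | _ n ih =>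
    intro A hA
    have hdet : A.1 0 0 * A.1 1 1 - A.1 0 1 * A.1 1 0 = 1 := by
      have := A.2
      rwa [Matrix.det_fin_two] at this
    by_cases hc : A.1 1 0 = 0
    · -- bottom-left is zero
      have had : A.1 0 0 * A.1 1 1 = 1 := by rw [hc] at hdet; linarith
      have h1 : (A.1 0 0 = 1 ∧ A.1 1 1 = 1) ∨ (A.1 0 0 = -1 ∧ A.1 1 1 = -1) :=
        Int.mul_eq_one_iff_eq_one_or_neg_one.mp had
      rcases h1 with ⟨ha, hd⟩ | ⟨ha, hd⟩
      · have : A = s ^ (A.1 0 1) := by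
          apply Subtype.ext
          rw [s_zpow]
          ext i j
          fin_cases i <;> fin_cases j <;> simp [ha, hd, hc]
        rw [this]; exact zpow_mem hs _
      · have htt : ((t * t : SL2Z) : Matrix (Fin 2) (Fin 2) ℤ) = !![-1, 0; 0, -1] := by
          rw [Matrix.SpecialLinearGroup.coe_mul]; simp [t, Matrix.mul_fin_two]
        have : A = t * t * s ^ (-(A.1 0 1)) := by
          apply Subtype.ext
          rw [Matrix.SpecialLinearGroup.coe_mul, htt, s_zpow]
          ext i j
          fin_cases i <;> fin_cases j <;>
            simp [ha, hd, hc, Matrix.mul_fin_two]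
        rw [this]
        exact mul_mem (mul_mem ht ht) (zpow_mem hs _)
    · -- Euclidean step
      set a := A.1 0 0 with hadef
      set c := A.1 1 0 with hcdef
      set q := a / c with hq
      set B := t * (s ^ (-q) * A) with hB
      have hBc : B.1 1 0 = a % c := by
        have h1 : ((s ^ (-q) * A : SL2Z) : Matrix (Fin 2) (Fin 2) ℤ) 0 0 = a - q * c := by
          rw [Matrix.SpecialLinearGroup.coe_mul, s_zpow]
          simp [Matrix.mul_apply, Fin.sum_univ_two]
          ring
        have : B.1 1 0 = ((s ^ (-q) * A : SL2Z) : Matrix (Fin 2) (Fin 2) ℤ) 0 0 := by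
          rw [hB, Matrix.SpecialLinearGroup.coe_mul]
          simp [t, Matrix.mul_apply, Fin.sum_univ_two]
        rw [this, h1, hq]
        rw [Int.emod_def]
        ring
      have hlt : (B.1 1 0).natAbs < n := by
        rw [hBc, ← hA]
        have h0 : 0 ≤ a % c := Int.emod_nonneg a hc
        have h2 : a % c < |c| := by rw [Int.abs_eq_natAbs]; exact Int.emod_lt a hc
        rcases abs_cases c with ⟨habs, _⟩ | ⟨habs, _⟩ <;> omega
      have hBmem : B ∈ C := ih _ hlt B rfl
      have : A = s ^ q * (t⁻¹ * B) := by
        rw [hB]; group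
      rw [this]
      exact mul_mem (zpow_mem hs _) (mul_mem (inv_mem ht) hBmem)

end GammaJ


namespace GammaJ

/-! ### Auxiliary facts in the Jacobi group -/

/-- The projection onto the matrix part is a group homomorphism. -/
def projM : GammaJ →* SL2Z where
  toFun g := g.M
  map_one' := rfl
  map_mul' _ _ := rfl

lemma S_M : S.M = s := rfl
lemma T_M : T.M = t := rfl

/-- Tactic-friendly equality test in `GammaJ`. -/
lemma eq_iff (g h : GammaJ) :
    g = h ↔ (∀ i j, (g.M : Matrix (Fin 2) (Fin 2) ℤ) i j = (h.M : Matrix (Fin 2) (Fin 2) ℤ) i j)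
      ∧ (∀ i, g.X i = h.X i) := by
  constructor
  · rintro rfl; exact ⟨fun _ _ => rfl, fun _ => rfl⟩
  · rintro ⟨h1, h2⟩
    ext : 1
    · exact Subtype.ext (by ext i j; exact h1 i j)
    · funext i; exact h2 i

lemma S_mul_T : S * T = U := by
  rw [eq_iff]
  constructor
  · intro i j
    simp only [mul_M, Matrix.SpecialLinearGroup.coe_mul, Matrix.SpecialLinearGroup.coe_one]
    fin_cases i <;> fin_cases j <;>
      simp [S, T, U, Matrix.mul_apply, Fin.sum_univ_two]
  · intro i
    fin_cases i <;>
      simp [S, T, U, Matrix.vecMul, dotProduct, Fin.sum_univ_two]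

/-- The translation `⟨1, ![0,-1]⟩`, inverse of `I₁`. -/
def Jel : GammaJ := ⟨1, ![0, -1]⟩

lemma TTSTT : T * T * S * T * T = Jel * S := by
  rw [eq_iff]
  constructor
  · intro i j
    simp only [mul_M, Matrix.SpecialLinearGroup.coe_mul, Matrix.SpecialLinearGroup.coe_one]
    fin_cases i <;> fin_cases j <;>
      simp [S, T, Jel, Matrix.mul_apply, Fin.sum_univ_two]
  · intro i
    fin_cases i <;>
      simp [S, T, Jel, Matrix.vecMul, dotProduct, Fin.sum_univ_two,
        Matrix.mul_apply]

lemma Jel_mul_I₁ : Jel * I₁ = 1 := by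
  rw [eq_iff]
  constructor
  · intro i j; simp [Jel, I₁]
  · intro i
    fin_cases i <;>
      simp [Jel, I₁, Matrix.vecMul, dotProduct, Fin.sum_univ_two]

lemma I₁_mul_T : I₁ * T = T * I₂ := by
  rw [eq_iff]
  constructor
  · intro i j
    simp only [mul_M, Matrix.SpecialLinearGroup.coe_mul, Matrix.SpecialLinearGroup.coe_one]
    simp [T, I₁, I₂]
  · intro i
    fin_cases i <;>
      simp [T, I₁, I₂, Matrix.vecMul, dotProduct, Fin.sum_univ_two]

lemma trans_inv (X : Fin 2 → ℤ) : (⟨1, X⟩ : GammaJ)⁻¹ = ⟨1, -X⟩ := by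
  ext : 1
  · exact inv_one
  · simp

end GammaJ

/-- The Jacobi group `Γ^J` is generated by the two elements `T` and `U`. -/
theorem GammaJ.closure_T_U_eq_top :
    Subgroup.closure ({GammaJ.T, GammaJ.U} : Set GammaJ) = ⊤ := by
  rw [eq_top_iff]
  intro g _
  set H := Subgroup.closure ({T, U} : Set GammaJ) with hH
  have hT : T ∈ H := Subgroup.subset_closure (by simp)
  have hU : U ∈ H := Subgroup.subset_closure (by simp)
  have hS : S ∈ H := by
    have h1 : S = U * T⁻¹ := eq_mul_inv_of_mul_eq S_mul_T
    rw [h1]; exact mul_mem hU (inv_mem hT)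
  have hJel : Jel ∈ H := by
    have h1 : Jel = T * T * S * T * T * S⁻¹ := eq_mul_inv_of_mul_eq TTSTT.symm
    rw [h1]
    exact mul_mem (mul_mem (mul_mem (mul_mem (mul_mem hT hT) hS) hT) hT) (inv_mem hS)
  have hI₁ : I₁ ∈ H := by
    have h1 : I₁ = Jel⁻¹ := eq_inv_of_mul_eq_one_right Jel_mul_I₁
    rw [h1]; exact inv_mem hJel
  have hI₂ : I₂ ∈ H := by
    have h1 : I₂ = T⁻¹ * (I₁ * T) := by rw [I₁_mul_T, inv_mul_cancel_left]
    rw [h1]; exact mul_mem (inv_mem hT) (mul_mem hI₁ hT)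
  have htrans : ∀ X : Fin 2 → ℤ, (⟨1, X⟩ : GammaJ) ∈ H := by
    intro X
    have hX : (⟨1, X⟩ : GammaJ) = I₂ ^ (X 0) * I₁ ^ (X 1) := by
      show _ = (⟨1, ![1,0]⟩ : GammaJ) ^ (X 0) * (⟨1, ![0,1]⟩ : GammaJ) ^ (X 1)
      rw [trans_zpow, trans_zpow, trans_mul]
      congr 1
      funext i; fin_cases i <;> simp
    rw [hX]
    exact mul_mem (zpow_mem hI₂ _) (zpow_mem hI₁ _)
  obtain ⟨w, hwH, hwM⟩ : ∃ w ∈ H, w.M = g.M := by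
    have hle : Subgroup.closure ({s, t} : Set SL2Z) ≤ Subgroup.map projM H := by
      rw [Subgroup.closure_le]
      rintro x (rfl | rfl)
      · exact ⟨S, hS, rfl⟩
      · exact ⟨T, hT, rfl⟩
    obtain ⟨w, hw, hwM⟩ := hle (sl2_mem_closure g.M)
    exact ⟨w, hw, hwM⟩
  have hg : g = (⟨1, (g * w⁻¹).X⟩ : GammaJ) * w := by
    have h1 : g * w⁻¹ = ⟨1, (g * w⁻¹).X⟩ := by
      ext : 1
      · show g.M * w.M⁻¹ = 1
        rw [← hwM, mul_inv_cancel]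
      · rfl
    calc g = (g * w⁻¹) * w := by group
      _ = _ := by rw [h1]
  rw [hg]
  exact mul_mem (htrans _) hwH
end

section
/- For every γ ∈ Γ^J, the element γ − E of the group ring ℤ[Γ^J] lies in (T−E)·ℤ[Γ^J] + (S−E)·ℤ[Γ^J]. -/
open Matrix

-- ===== auxiliary material =====


theorem sl2_gen (M : Matrix.SpecialLinearGroup (Fin 2) ℤ) :
    M ∈ Subgroup.closure {ModularGroup.S, ModularGroup.T} := by
  suffices h : ∀ n (M : Matrix.SpecialLinearGroup (Fin 2) ℤ),
      ((M : Matrix (Fin 2) (Fin 2) ℤ) 1 0).natAbs = n →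
      M ∈ Subgroup.closure {ModularGroup.S, ModularGroup.T} from h _ M rfl
  intro n
  induction n using Nat.strong_induction_on with
  | _ n ih =>
    intro M hM
    have hS : ModularGroup.S ∈ Subgroup.closure {ModularGroup.S, ModularGroup.T} :=
      Subgroup.subset_closure (Set.mem_insert _ _)
    have hT : ModularGroup.T ∈ Subgroup.closure {ModularGroup.S, ModularGroup.T} :=
      Subgroup.subset_closure (Set.mem_insert_of_mem _ rfl)
    by_cases hc : (M : Matrix (Fin 2) (Fin 2) ℤ) 1 0 = 0
    · have hdet : (M : Matrix (Fin 2) (Fin 2) ℤ).det = 1 := M.2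
      rw [Matrix.det_fin_two, hc, mul_zero, sub_zero] at hdet
      rcases Int.mul_eq_one_iff_eq_one_or_neg_one.mp hdet with ⟨ha, hd⟩ | ⟨ha, hd⟩
      · have : M = ModularGroup.T ^ ((M : Matrix (Fin 2) (Fin 2) ℤ) 0 1) := by
          apply Subtype.ext
          rw [ModularGroup.coe_T_zpow]
          conv_lhs => rw [Matrix.eta_fin_two (M : Matrix (Fin 2) (Fin 2) ℤ)]
          rw [ha, hd, hc]
        rw [this]
        exact Subgroup.zpow_mem _ hT _
      · have : M = ModularGroup.S * ModularGroup.S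
            * ModularGroup.T ^ (-((M : Matrix (Fin 2) (Fin 2) ℤ) 0 1)) := by
          apply Subtype.ext
          rw [Matrix.SpecialLinearGroup.coe_mul, Matrix.SpecialLinearGroup.coe_mul,
            ModularGroup.coe_T_zpow, ModularGroup.coe_S]
          conv_lhs => rw [Matrix.eta_fin_two (M : Matrix (Fin 2) (Fin 2) ℤ)]
          rw [ha, hd, hc]
          ext i j
          fin_cases i <;> fin_cases j <;>
            simp [Matrix.mul_apply, Fin.sum_univ_two]
        rw [this]
        exact Subgroup.mul_mem _ (Subgroup.mul_mem _ hS hS) (Subgroup.zpow_mem _ hT _)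
    · set a := (M : Matrix (Fin 2) (Fin 2) ℤ) 0 0 with ha
      set c := (M : Matrix (Fin 2) (Fin 2) ℤ) 1 0 with hcc
      set k : ℤ := -(a / c) with hk
      set N := ModularGroup.S * (ModularGroup.T ^ k * M) with hN
      have hTn : ((ModularGroup.T ^ k * M : Matrix.SpecialLinearGroup (Fin 2) ℤ)
          : Matrix (Fin 2) (Fin 2) ℤ) 0 0 = a + k * c := by
        rw [Matrix.SpecialLinearGroup.coe_mul, Matrix.mul_apply, Fin.sum_univ_two,
          ModularGroup.coe_T_zpow]
        rw [show (!![1, k; 0, 1] : Matrix (Fin 2) (Fin 2) ℤ) 0 0 = 1 from rfl,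
          show (!![1, k; 0, 1] : Matrix (Fin 2) (Fin 2) ℤ) 0 1 = k from rfl]
        rw [one_mul, ← ha, ← hcc]
      have hN10 : ((N : Matrix.SpecialLinearGroup (Fin 2) ℤ)
          : Matrix (Fin 2) (Fin 2) ℤ) 1 0 = a % c := by
        rw [hN, Matrix.SpecialLinearGroup.coe_mul, Matrix.mul_apply, Fin.sum_univ_two,
          ModularGroup.coe_S]
        rw [show (!![0, -1; 1, 0] : Matrix (Fin 2) (Fin 2) ℤ) 1 0 = 1 from rfl,
          show (!![0, -1; 1, 0] : Matrix (Fin 2) (Fin 2) ℤ) 1 1 = 0 from rfl]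
        rw [one_mul, zero_mul, add_zero, hTn, hk, Int.emod_def]
        ring
      have hlt : (((N : Matrix.SpecialLinearGroup (Fin 2) ℤ)
          : Matrix (Fin 2) (Fin 2) ℤ) 1 0).natAbs < n := by
        rw [hN10, ← hM]
        have hc' : c ≠ 0 := hc
        have h1 : 0 ≤ a % c := Int.emod_nonneg a hc'
        have h2 : a % c < (c.natAbs : ℤ) := by
          rcases hc'.lt_or_gt with h | h
          · rw [← Int.emod_neg]
            calc a % (-c) < -c := Int.emod_lt_of_pos a (by omega)
              _ ≤ (c.natAbs : ℤ) := by omega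
          · calc a % c < c := Int.emod_lt_of_pos a h
              _ ≤ (c.natAbs : ℤ) := by omega
        omega
      have hNmem := ih _ hlt N rfl
      have : M = ModularGroup.T ^ (-k) * (ModularGroup.S⁻¹ * N) := by
        rw [hN]; group
      rw [this]
      exact Subgroup.mul_mem _ (Subgroup.zpow_mem _ hT _)
        (Subgroup.mul_mem _ (Subgroup.inv_mem _ hS) hNmem)

namespace GammaJ

open MonoidAlgebra

lemma E_eq_one : (E : GammaJ) = 1 := rfl

lemma of_E : MonoidAlgebra.of ℤ GammaJ GammaJ.E = 1 := by
  rw [E_eq_one, _root_.map_one]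

/-- The predicate of the theorem. -/
def good (γ : GammaJ) : Prop :=
  ∃ x y : MonoidAlgebra ℤ GammaJ,
    MonoidAlgebra.of ℤ GammaJ γ - MonoidAlgebra.of ℤ GammaJ GammaJ.E =
      (MonoidAlgebra.of ℤ GammaJ GammaJ.T - MonoidAlgebra.of ℤ GammaJ GammaJ.E) * x
        + (MonoidAlgebra.of ℤ GammaJ GammaJ.S - MonoidAlgebra.of ℤ GammaJ GammaJ.E) * y

/-- The set of good elements is a subgroup. -/
def HJ : Subgroup GammaJ where
  carrier := {γ | good γ}
  one_mem' := ⟨0, 0, by rw [of_E, _root_.map_one]; simp⟩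
  mul_mem' := by
    rintro a b ⟨xa, ya, hA⟩ ⟨xb, yb, hB⟩
    refine ⟨xa * MonoidAlgebra.of ℤ GammaJ b + xb, ya * MonoidAlgebra.of ℤ GammaJ b + yb, ?_⟩
    have h : MonoidAlgebra.of ℤ GammaJ (a * b) - MonoidAlgebra.of ℤ GammaJ GammaJ.E =
        (MonoidAlgebra.of ℤ GammaJ a - MonoidAlgebra.of ℤ GammaJ GammaJ.E)
          * MonoidAlgebra.of ℤ GammaJ b
        + (MonoidAlgebra.of ℤ GammaJ b - MonoidAlgebra.of ℤ GammaJ GammaJ.E) := by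
      rw [_root_.map_mul, of_E]; noncomm_ring
    rw [h, hA, hB]; noncomm_ring
  inv_mem' := by
    rintro a ⟨x, y, h⟩
    refine ⟨-(x * MonoidAlgebra.of ℤ GammaJ a⁻¹), -(y * MonoidAlgebra.of ℤ GammaJ a⁻¹), ?_⟩
    have key : MonoidAlgebra.of ℤ GammaJ a * MonoidAlgebra.of ℤ GammaJ a⁻¹ = 1 := by
      rw [← _root_.map_mul, mul_inv_cancel, _root_.map_one]
    calc MonoidAlgebra.of ℤ GammaJ a⁻¹ - MonoidAlgebra.of ℤ GammaJ GammaJ.E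
        = -((MonoidAlgebra.of ℤ GammaJ a - MonoidAlgebra.of ℤ GammaJ GammaJ.E)
            * MonoidAlgebra.of ℤ GammaJ a⁻¹) := by
          rw [of_E, sub_mul, key, one_mul]; noncomm_ring
      _ = _ := by rw [h]; noncomm_ring

lemma T_mem : GammaJ.T ∈ HJ := ⟨1, 0, by noncomm_ring⟩

lemma S_mem : GammaJ.S ∈ HJ := ⟨0, 1, by noncomm_ring⟩

lemma I1_eq : I₁ = S * T * S * T⁻¹ * S * T := by
  ext : 1
  · exact Subtype.ext (by decide)
  · decide

lemma I2_eq : I₂ = S * T⁻¹ * S * T * S * T := by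
  ext : 1
  · exact Subtype.ext (by decide)
  · decide

lemma I1_mem : I₁ ∈ HJ := by
  rw [I1_eq]
  exact mul_mem (mul_mem (mul_mem (mul_mem (mul_mem S_mem T_mem) S_mem) (inv_mem T_mem))
    S_mem) T_mem

lemma I2_mem : I₂ ∈ HJ := by
  rw [I2_eq]
  exact mul_mem (mul_mem (mul_mem (mul_mem (mul_mem S_mem (inv_mem T_mem)) S_mem) T_mem)
    S_mem) T_mem

lemma latt_mul (v w : Fin 2 → ℤ) : (⟨1, v⟩ : GammaJ) * ⟨1, w⟩ = ⟨1, v + w⟩ := by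
  ext : 1
  · simp
  · simp

lemma latt_inv (v : Fin 2 → ℤ) : (⟨1, v⟩ : GammaJ)⁻¹ = ⟨1, -v⟩ := by
  ext : 1
  · simp
  · simp

lemma latt_zpow (v : Fin 2 → ℤ) (n : ℤ) : (⟨1, v⟩ : GammaJ) ^ n = ⟨1, n • v⟩ := by
  induction n using Int.induction_on with
  | zero => ext : 1 <;> simp
  | succ k ih => rw [_root_.zpow_add_one, ih, latt_mul]; congr 1; module
  | pred k ih => rw [_root_.zpow_sub_one, ih, latt_inv, latt_mul]; congr 1; module

lemma latt_mem (v : Fin 2 → ℤ) : (⟨1, v⟩ : GammaJ) ∈ HJ := by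
  have h : (⟨1, v⟩ : GammaJ) = I₂ ^ (v 0) * I₁ ^ (v 1) := by
    rw [show I₂ = (⟨1, ![1, 0]⟩ : GammaJ) from rfl, show I₁ = (⟨1, ![0, 1]⟩ : GammaJ) from rfl,
      latt_zpow, latt_zpow, latt_mul]
    refine GammaJ.ext rfl ?_
    funext i
    fin_cases i <;> simp
  rw [h]
  exact mul_mem (zpow_mem I2_mem _) (zpow_mem I1_mem _)

/-- The inclusion `SL₂(ℤ) →* Γ^J`. -/
def iota : SL2Z →* GammaJ where
  toFun M := ⟨M, 0⟩
  map_one' := rfl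
  map_mul' a b := by
    ext : 1
    · rfl
    · show (0 : Fin 2 → ℤ) = Matrix.vecMul 0 _ + 0
      simp [Matrix.zero_vecMul]

lemma iota_S_mem : iota ModularGroup.S ∈ HJ := by
  have h : iota ModularGroup.S = I₁⁻¹ * T := by
    ext : 1
    · exact Subtype.ext (by decide)
    · decide
  rw [h]
  exact mul_mem (inv_mem I1_mem) T_mem

lemma iota_T_mem : iota ModularGroup.T ∈ HJ := by
  have h : iota ModularGroup.T = S := by
    ext : 1
    · exact Subtype.ext (by decide)
    · funext i; fin_cases i <;> rfl
  rw [h]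
  exact S_mem

lemma iota_mem (M : SL2Z) : iota M ∈ HJ := by
  have hle : Subgroup.closure {ModularGroup.S, ModularGroup.T} ≤ HJ.comap iota := by
    rw [Subgroup.closure_le]
    rintro g (rfl | rfl)
    · exact iota_S_mem
    · exact iota_T_mem
  exact hle (sl2_gen M)

lemma mem_HJ (γ : GammaJ) : γ ∈ HJ := by
  have h : γ = iota γ.M * ⟨1, γ.X⟩ := by
    ext : 1
    · show γ.M = γ.M * 1; rw [mul_one]
    · show γ.X = Matrix.vecMul 0 _ + γ.X
      simp [Matrix.zero_vecMul]
  rw [h]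
  exact mul_mem (iota_mem γ.M) (latt_mem γ.X)

end GammaJ

open MonoidAlgebra in
/-- For every `γ ∈ Γ^J`, the element `γ − E` of the group ring `ℤ[Γ^J]`
lies in `(T−E)·ℤ[Γ^J] + (S−E)·ℤ[Γ^J]`. -/
theorem GammaJ.sub_one_mem (γ : GammaJ) :
    ∃ x y : MonoidAlgebra ℤ GammaJ,
      MonoidAlgebra.of ℤ GammaJ γ - MonoidAlgebra.of ℤ GammaJ GammaJ.E =
        (MonoidAlgebra.of ℤ GammaJ GammaJ.T - MonoidAlgebra.of ℤ GammaJ GammaJ.E) * x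
          + (MonoidAlgebra.of ℤ GammaJ GammaJ.S - MonoidAlgebra.of ℤ GammaJ GammaJ.E) * y := by
  exact GammaJ.mem_HJ γ
end

section
/- Let V be a left ℤ[Γ^J]-module and v ∈ V. If v ∈ (E+T+T²+T³)V + (E+U+U²+U³+U⁴+U⁵)V, then (E−T)v ∈ (E−S)V. -/
open Matrix

namespace GammaJ

/-- The image of a group element in the integral group ring `ℤ[Γ^J]`. -/
noncomputable def of (γ : GammaJ) : MonoidAlgebra ℤ GammaJ := MonoidAlgebra.of ℤ GammaJ γ

/-- The element `E + T + T² + T³` of `ℤ[Γ^J]`. -/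
noncomputable def sigmaT : MonoidAlgebra ℤ GammaJ := of E + of T + of T ^ 2 + of T ^ 3

/-- The element `E + U + U² + U³ + U⁴ + U⁵` of `ℤ[Γ^J]`. -/
noncomputable def sigmaU : MonoidAlgebra ℤ GammaJ :=
  of E + of U + of U ^ 2 + of U ^ 3 + of U ^ 4 + of U ^ 5

end GammaJ


namespace GammaJ

lemma T_pow_four : T ^ 4 = 1 := by
  rw [pow_succ, pow_succ, pow_succ, pow_one]
  ext : 1
  · ext i j
    fin_cases i <;> fin_cases j <;>
      simp [T, Matrix.SpecialLinearGroup.coe_mul, Matrix.mul_apply, Fin.sum_univ_two] <;> rfl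
  · funext i
    fin_cases i <;>
      simp [T, Matrix.SpecialLinearGroup.coe_mul, Matrix.vecMul, dotProduct,
        Fin.sum_univ_two, Matrix.mul_apply]

lemma U_pow_six : U ^ 6 = 1 := by
  rw [pow_succ, pow_succ, pow_succ, pow_succ, pow_succ, pow_one]
  ext : 1
  · ext i j
    fin_cases i <;> fin_cases j <;>
      simp [U, Matrix.SpecialLinearGroup.coe_mul, Matrix.mul_apply, Fin.sum_univ_two] <;> rfl
  · funext i
    fin_cases i <;>
      simp [U, Matrix.SpecialLinearGroup.coe_mul, Matrix.vecMul, dotProduct,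
        Fin.sum_univ_two, Matrix.mul_apply]

lemma of_mul (a b : GammaJ) : of (a * b) = of a * of b := map_mul (MonoidAlgebra.of ℤ GammaJ) a b

@[simp] lemma of_one : of (1 : GammaJ) = 1 := map_one (MonoidAlgebra.of ℤ GammaJ)

end GammaJ

/-- Let `V` be a left `ℤ[Γ^J]`-module and `v ∈ V`.
If `v ∈ (E+T+T²+T³)V + (E+U+U²+U³+U⁴+U⁵)V`, then `(E−T)v ∈ (E−S)V`. -/
theorem GammaJ.one_sub_T_smul_mem {V : Type*} [AddCommGroup V]
    [Module (MonoidAlgebra ℤ GammaJ) V] (v : V)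
    (hv : ∃ x y : V, v = GammaJ.sigmaT • x + GammaJ.sigmaU • y) :
    ∃ w : V, (GammaJ.of GammaJ.E - GammaJ.of GammaJ.T) • v =
      (GammaJ.of GammaJ.E - GammaJ.of GammaJ.S) • w := by
  obtain ⟨x, y, rfl⟩ := hv
  set t := GammaJ.of GammaJ.T with ht
  set s := GammaJ.of GammaJ.S with hs
  set u := GammaJ.of GammaJ.U with hu
  set s' := GammaJ.of (GammaJ.S)⁻¹ with hs'
  have hE : GammaJ.of GammaJ.E = 1 := GammaJ.of_one
  have ht4 : t ^ 4 = 1 := by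
    rw [ht, GammaJ.of, ← map_pow, GammaJ.T_pow_four, _root_.map_one]
  have hu6 : u ^ 6 = 1 := by
    rw [hu, GammaJ.of, ← map_pow, GammaJ.U_pow_six, _root_.map_one]
  have hst : s * t = u := by rw [hs, ht, hu, ← GammaJ.of_mul, GammaJ.S_mul_T]
  have hss' : s * s' = 1 := by
    rw [hs, hs', ← GammaJ.of_mul, mul_inv_cancel, GammaJ.of_one]
  have hs's : s' * s = 1 := by
    rw [hs, hs', ← GammaJ.of_mul, inv_mul_cancel, GammaJ.of_one]
  have htsu : t = s' * u := by
    rw [← hst, ← mul_assoc, hs's, one_mul]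
  have hσT : GammaJ.sigmaT = 1 + t + t ^ 2 + t ^ 3 := by
    rw [GammaJ.sigmaT, hE]
  have hσU : GammaJ.sigmaU = 1 + u + u ^ 2 + u ^ 3 + u ^ 4 + u ^ 5 := by
    rw [GammaJ.sigmaU, hE]
  have h1 : (1 - t) * GammaJ.sigmaT = 0 := by
    have e : (1 - t) * GammaJ.sigmaT = 1 - t ^ 4 := by rw [hσT]; noncomm_ring
    rw [e, ht4, sub_self]
  have h2 : u * GammaJ.sigmaU = GammaJ.sigmaU := by
    have e1 : u * GammaJ.sigmaU = u + u ^ 2 + u ^ 3 + u ^ 4 + u ^ 5 + u ^ 6 := by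
      rw [hσU]; noncomm_ring
    rw [e1, hu6, hσU]; noncomm_ring
  have h3 : t * GammaJ.sigmaU = s' * GammaJ.sigmaU := by
    rw [htsu, mul_assoc, h2]
  have h4 : (1 - t) * GammaJ.sigmaU = (1 - s) * (-(s' * GammaJ.sigmaU)) := by
    rw [sub_mul, one_mul, h3, mul_neg, sub_mul, one_mul, ← mul_assoc, hss', one_mul,
      neg_sub, sub_eq_sub_iff_add_eq_add]
  refine ⟨(-(s' * GammaJ.sigmaU)) • y, ?_⟩
  rw [hE, smul_add, ← mul_smul, ← mul_smul, h1, zero_smul, zero_add,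
    ← mul_smul, h4, mul_smul]
end

section
/- The map Φ sending an integer matrix ((a,b),(c,d)) to ((c,d),(−a+c⌊a/c⌋, −b+d⌊a/c⌋)) maps 𝒜_n into ℬ_n, the map Ψ sending ((a,b),(c,d)) to ((−c+a⌊d/b⌋, −d+b⌊d/b⌋),(a,b)) maps ℬ_n into 𝒜_n, and Φ and Ψ are mutually inverse bijections between 𝒜_n and ℬ_n. -/
open Matrix

/-- `gcd(a,b,c,d)` is a perfect square. -/
def GcdSquare (a b c d : ℤ) : Prop :=
  ∃ e : ℤ, (Int.gcd a (Int.gcd b (Int.gcd c d)) : ℤ) = e ^ 2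

/-- The set `𝒜_n`: integer matrices `((a,b),(c,d))` with `ad−bc = n²`,
`gcd(a,b,c,d)` a perfect square, `a > c > 0`, `d > −b ≥ 0`, and `b = 0 → a ≥ 2c`. -/
def SetA (n : ℕ) : Set (Matrix (Fin 2) (Fin 2) ℤ) :=
  {A | A 0 0 * A 1 1 - A 0 1 * A 1 0 = (n : ℤ) ^ 2 ∧
    GcdSquare (A 0 0) (A 0 1) (A 1 0) (A 1 1) ∧
    A 0 0 > A 1 0 ∧ A 1 0 > 0 ∧ A 1 1 > -A 0 1 ∧ -A 0 1 ≥ 0 ∧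
    (A 0 1 = 0 → A 0 0 ≥ 2 * A 1 0)}

/-- The set `ℬ_n`: integer matrices `((a,b),(c,d))` with `ad−bc = n²`,
`gcd(a,b,c,d)` a perfect square, `a > −c ≥ 0`, `d > b > 0`, and `c = 0 → d ≥ 2b`. -/
def SetB (n : ℕ) : Set (Matrix (Fin 2) (Fin 2) ℤ) :=
  {A | A 0 0 * A 1 1 - A 0 1 * A 1 0 = (n : ℤ) ^ 2 ∧
    GcdSquare (A 0 0) (A 0 1) (A 1 0) (A 1 1) ∧
    A 0 0 > -A 1 0 ∧ -A 1 0 ≥ 0 ∧ A 1 1 > A 0 1 ∧ A 0 1 > 0 ∧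
    (A 1 0 = 0 → A 1 1 ≥ 2 * A 0 1)}

/-- The map `Φ : ((a,b),(c,d)) ↦ ((c,d),(−a+c⌊a/c⌋, −b+d⌊a/c⌋))`. -/
def Phi (A : Matrix (Fin 2) (Fin 2) ℤ) : Matrix (Fin 2) (Fin 2) ℤ :=
  !![A 1 0, A 1 1;
     -A 0 0 + A 1 0 * Int.fdiv (A 0 0) (A 1 0), -A 0 1 + A 1 1 * Int.fdiv (A 0 0) (A 1 0)]

/-- The map `Ψ : ((a,b),(c,d)) ↦ ((−c+a⌊d/b⌋, −d+b⌊d/b⌋),(a,b))`. -/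
def Psi (A : Matrix (Fin 2) (Fin 2) ℤ) : Matrix (Fin 2) (Fin 2) ℤ :=
  !![-A 1 0 + A 0 0 * Int.fdiv (A 1 1) (A 0 1), -A 1 1 + A 0 1 * Int.fdiv (A 1 1) (A 0 1);
     A 0 0, A 0 1]

private lemma g4_dvd {k a b c d : ℤ} (ha : k ∣ a) (hb : k ∣ b) (hc : k ∣ c) (hd : k ∣ d) :
    k ∣ (Int.gcd a (Int.gcd b (Int.gcd c d)) : ℤ) :=
  Int.dvd_coe_gcd ha (Int.dvd_coe_gcd hb (Int.dvd_coe_gcd hc hd))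

private lemma g4_dvd_a (a b c d : ℤ) : (Int.gcd a (Int.gcd b (Int.gcd c d)) : ℤ) ∣ a :=
  Int.gcd_dvd_left _ _

private lemma g4_dvd_b (a b c d : ℤ) : (Int.gcd a (Int.gcd b (Int.gcd c d)) : ℤ) ∣ b :=
  (Int.gcd_dvd_right _ _).trans (Int.gcd_dvd_left _ _)

private lemma g4_dvd_c (a b c d : ℤ) : (Int.gcd a (Int.gcd b (Int.gcd c d)) : ℤ) ∣ c :=
  (Int.gcd_dvd_right _ _).trans ((Int.gcd_dvd_right _ _).trans (Int.gcd_dvd_left _ _))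

private lemma g4_dvd_d (a b c d : ℤ) : (Int.gcd a (Int.gcd b (Int.gcd c d)) : ℤ) ∣ d :=
  (Int.gcd_dvd_right _ _).trans ((Int.gcd_dvd_right _ _).trans (Int.gcd_dvd_right _ _))

private lemma g4_eq {a b c d a' b' c' d' : ℤ}
    (h1 : ∀ k : ℤ, k ∣ a → k ∣ b → k ∣ c → k ∣ d → k ∣ a' ∧ k ∣ b' ∧ k ∣ c' ∧ k ∣ d')
    (h2 : ∀ k : ℤ, k ∣ a' → k ∣ b' → k ∣ c' → k ∣ d' → k ∣ a ∧ k ∣ b ∧ k ∣ c ∧ k ∣ d) :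
    (Int.gcd a' (Int.gcd b' (Int.gcd c' d')) : ℤ) = Int.gcd a (Int.gcd b (Int.gcd c d)) := by
  apply Int.dvd_antisymm (Int.natCast_nonneg _) (Int.natCast_nonneg _)
  · obtain ⟨ha, hb, hc, hd⟩ :=
      h2 _ (g4_dvd_a a' b' c' d') (g4_dvd_b a' b' c' d') (g4_dvd_c a' b' c' d')
        (g4_dvd_d a' b' c' d')
    exact g4_dvd ha hb hc hd
  · obtain ⟨ha, hb, hc, hd⟩ :=
      h1 _ (g4_dvd_a a b c d) (g4_dvd_b a b c d) (g4_dvd_c a b c d) (g4_dvd_d a b c d)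
    exact g4_dvd ha hb hc hd

private lemma gcdsq_shift (a b c d q : ℤ) (h : GcdSquare a b c d) :
    GcdSquare c d (-a + c * q) (-b + d * q) := by
  obtain ⟨e, he⟩ := h
  refine ⟨e, ?_⟩
  rw [g4_eq (a := a) (b := b) (c := c) (d := d)
    (fun k ha hb hc hd => ⟨hc, hd, dvd_add (dvd_neg.mpr ha) (hc.mul_right q),
      dvd_add (dvd_neg.mpr hb) (hd.mul_right q)⟩)
    (fun k hc hd ha' hb' => ⟨(show a = c * q - (-a + c * q) by ring) ▸ (hc.mul_right q).sub ha',
      (show b = d * q - (-b + d * q) by ring) ▸ (hd.mul_right q).sub hb', hc, hd⟩)]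
  exact he

private lemma gcdsq_shift' (a b c d q : ℤ) (h : GcdSquare a b c d) :
    GcdSquare (-c + a * q) (-d + b * q) a b := by
  obtain ⟨e, he⟩ := h
  refine ⟨e, ?_⟩
  rw [g4_eq (a := a) (b := b) (c := c) (d := d)
    (fun k ha hb hc hd => ⟨dvd_add (dvd_neg.mpr hc) (ha.mul_right q),
      dvd_add (dvd_neg.mpr hd) (hb.mul_right q), ha, hb⟩)
    (fun k hc' hd' ha hb => ⟨ha, hb,
      (show c = a * q - (-c + a * q) by ring) ▸ (ha.mul_right q).sub hc',
      (show d = b * q - (-d + b * q) by ring) ▸ (hb.mul_right q).sub hd'⟩)]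
  exact he

/-- `Φ` maps `𝒜_n` into `ℬ_n`, `Ψ` maps `ℬ_n` into `𝒜_n`, and
`Φ` and `Ψ` are mutually inverse bijections between `𝒜_n` and `ℬ_n`. -/
theorem phi_psi_bijection (n : ℕ) (hn : 0 < n) :
    (∀ A ∈ SetA n, Phi A ∈ SetB n) ∧ (∀ B ∈ SetB n, Psi B ∈ SetA n) ∧
      (∀ A ∈ SetA n, Psi (Phi A) = A) ∧ (∀ B ∈ SetB n, Phi (Psi B) = B) := by
  refine ⟨?_, ?_, ?_, ?_⟩
  · -- Φ maps 𝒜 into ℬ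
    intro A hA
    obtain ⟨hdet, hgcd, h1, h2, h3, h4, h5⟩ := hA
    set a := A 0 0 with hadef
    set b := A 0 1 with hbdef
    set c := A 1 0 with hcdef
    set d := A 1 1 with hddef
    have hc : (0:ℤ) < c := h2
    have hd0 : (0:ℤ) < d := by linarith
    have hfd : Int.fdiv a c = a / c := Int.fdiv_eq_ediv_of_nonneg a hc.le
    set q := a / c with hq
    have hmod : c * q + a % c = a := Int.mul_ediv_add_emod a c
    have hr0 : 0 ≤ a % c := Int.emod_nonneg a hc.ne'
    have hrc : a % c < c := Int.emod_lt_of_pos a hc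
    have hq1 : 1 ≤ q := (Int.le_ediv_iff_mul_le hc).mpr (by linarith)
    have hdq1 : d * 1 ≤ d * q := mul_le_mul_of_nonneg_left hq1 hd0.le
    have hq2' : b = 0 → 2 ≤ q := fun hb =>
      (Int.le_ediv_iff_mul_le hc).mpr (by linarith [h5 hb])
    simp only [SetB, Set.mem_setOf_eq, Phi, Matrix.of_apply, Matrix.cons_val', Matrix.cons_val_zero,
      Matrix.cons_val_one, Matrix.head_cons, Matrix.empty_val', Matrix.cons_val_fin_one,
      Matrix.head_fin_const, ← hadef, ← hbdef, ← hcdef, ← hddef, hfd]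
    refine ⟨by linear_combination hdet, gcdsq_shift a b c d q hgcd, by linarith, by linarith,
      ?_, hd0, ?_⟩
    · rcases lt_or_eq_of_le (show b ≤ 0 by linarith) with hb | hb
      · linarith
      · have h2q := hq2' hb
        have : d * 2 ≤ d * q := mul_le_mul_of_nonneg_left h2q hd0.le
        linarith
    · intro h0
      have haq : a = c * q := by linarith
      have : c * 1 < c * q := by linarith
      have hq2 : 2 ≤ q := by
        have := lt_of_mul_lt_mul_left this hc.le
        linarith
      have : d * 2 ≤ d * q := mul_le_mul_of_nonneg_left hq2 hd0.le
      linarith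
  · -- Ψ maps ℬ into 𝒜
    intro B hB
    obtain ⟨hdet, hgcd, h1, h2, h3, h4, h5⟩ := hB
    set a := B 0 0 with hadef
    set b := B 0 1 with hbdef
    set c := B 1 0 with hcdef
    set d := B 1 1 with hddef
    have hb : (0:ℤ) < b := h4
    have ha0 : (0:ℤ) < a := by linarith
    have hfd : Int.fdiv d b = d / b := Int.fdiv_eq_ediv_of_nonneg d hb.le
    set q := d / b with hq
    have hmod : b * q + d % b = d := Int.mul_ediv_add_emod d b
    have hr0 : 0 ≤ d % b := Int.emod_nonneg d hb.ne'
    have hrb : d % b < b := Int.emod_lt_of_pos d hb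
    have hq1 : 1 ≤ q := (Int.le_ediv_iff_mul_le hb).mpr (by linarith)
    have haq1 : a * 1 ≤ a * q := mul_le_mul_of_nonneg_left hq1 ha0.le
    have hq2' : c = 0 → 2 ≤ q := fun hc =>
      (Int.le_ediv_iff_mul_le hb).mpr (by linarith [h5 hc])
    simp only [SetA, Set.mem_setOf_eq, Psi, Matrix.of_apply, Matrix.cons_val', Matrix.cons_val_zero,
      Matrix.cons_val_one, Matrix.head_cons, Matrix.empty_val', Matrix.cons_val_fin_one,
      Matrix.head_fin_const, ← hadef, ← hbdef, ← hcdef, ← hddef, hfd]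
    refine ⟨by linear_combination hdet, gcdsq_shift' a b c d q hgcd, ?_, ha0,
      by linarith, by linarith, ?_⟩
    · rcases lt_or_eq_of_le (show c ≤ 0 by linarith) with hcneg | hczero
      · linarith
      · have h2q := hq2' hczero
        have : a * 2 ≤ a * q := mul_le_mul_of_nonneg_left h2q ha0.le
        linarith
    · intro h0
      have hdq : d = b * q := by linarith
      have : b * 1 < b * q := by linarith
      have hq2 : 2 ≤ q := by
        have := lt_of_mul_lt_mul_left this hb.le
        linarith
      have : a * 2 ≤ a * q := mul_le_mul_of_nonneg_left hq2 ha0.le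
      linarith
  · -- Ψ ∘ Φ = id on 𝒜
    intro A hA
    obtain ⟨hdet, hgcd, h1, h2, h3, h4, h5⟩ := hA
    have hc : (0:ℤ) < A 1 0 := h2
    have hd0 : (0:ℤ) < A 1 1 := by linarith
    have hfd : Int.fdiv (A 0 0) (A 1 0) = A 0 0 / A 1 0 := Int.fdiv_eq_ediv_of_nonneg _ hc.le
    have key : Int.fdiv (-A 0 1 + A 1 1 * (A 0 0 / A 1 0)) (A 1 1) = A 0 0 / A 1 0 := by
      rw [Int.fdiv_eq_ediv_of_nonneg _ hd0.le,
        show -A 0 1 + A 1 1 * (A 0 0 / A 1 0) = -A 0 1 + (A 0 0 / A 1 0) * A 1 1 by ring,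
        Int.add_mul_ediv_right _ _ hd0.ne',
        Int.ediv_eq_zero_of_lt (by linarith) (by linarith)]
      ring
    ext i j
    fin_cases i <;> fin_cases j <;>
      simp [Psi, Phi, hfd, key] <;> ring
  · -- Φ ∘ Ψ = id on ℬ
    intro B hB
    obtain ⟨hdet, hgcd, h1, h2, h3, h4, h5⟩ := hB
    have hb : (0:ℤ) < B 0 1 := h4
    have ha0 : (0:ℤ) < B 0 0 := by linarith
    have hfd : Int.fdiv (B 1 1) (B 0 1) = B 1 1 / B 0 1 := Int.fdiv_eq_ediv_of_nonneg _ hb.le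
    have key : Int.fdiv (-B 1 0 + B 0 0 * (B 1 1 / B 0 1)) (B 0 0) = B 1 1 / B 0 1 := by
      rw [Int.fdiv_eq_ediv_of_nonneg _ ha0.le,
        show -B 1 0 + B 0 0 * (B 1 1 / B 0 1) = -B 1 0 + (B 1 1 / B 0 1) * B 0 0 by ring,
        Int.add_mul_ediv_right _ _ ha0.ne',
        Int.ediv_eq_zero_of_lt (by linarith) (by linarith)]
      ring
    ext i j
    fin_cases i <;> fin_cases j <;>
      simp [Psi, Phi, hfd, key] <;> ring
end

section
/- For every positive integer n, the three elements T̂_n·(S−E), T̂_n·(I₁−E), and T̂_n·(I₂−E) of ℤ[G] all lie in (S−E)·ℤ[G] + (I₁−E)·ℤ[G] + (I₂−E)·ℤ[G]. -/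
open Matrix

/-- The group `G` of pairs `[M,X]` with `M ∈ GL₂(ℚ)` of positive determinant and
`X ∈ ℚ²` a row vector, with multiplication `[M₁,X₁]·[M₂,X₂] = [M₁M₂, X₁M₂ + X₂]`. -/
structure GQ where
  M : Matrix (Fin 2) (Fin 2) ℚ
  X : Fin 2 → ℚ
  hdet : 0 < M.det

namespace GQ

theorem ext' : ∀ {g h : GQ}, g.M = h.M → g.X = h.X → g = h
  | ⟨_, _, _⟩, ⟨_, _, _⟩, rfl, rfl => rfl

instance : Mul GQ :=
  ⟨fun g h => ⟨g.M * h.M, Matrix.vecMul g.X h.M + h.X, by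
    rw [Matrix.det_mul]; exact mul_pos g.hdet h.hdet⟩⟩

instance : One GQ := ⟨⟨1, 0, by simp⟩⟩

noncomputable instance : Inv GQ :=
  ⟨fun g => ⟨g.M⁻¹, -(Matrix.vecMul g.X g.M⁻¹), by
    rw [Matrix.det_nonsing_inv, Ring.inverse_eq_inv']
    exact inv_pos.mpr g.hdet⟩⟩

@[simp] lemma mul_M (g h : GQ) : (g * h).M = g.M * h.M := rfl
@[simp] lemma mul_X (g h : GQ) : (g * h).X = Matrix.vecMul g.X h.M + h.X := rfl
@[simp] lemma one_M : (1 : GQ).M = 1 := rfl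
@[simp] lemma one_X : (1 : GQ).X = 0 := rfl

noncomputable instance : Group GQ where
  mul_assoc a b c := ext' (mul_assoc _ _ _)
    (by simp [Matrix.add_vecMul, Matrix.vecMul_vecMul, add_assoc])
  one_mul a := ext' (one_mul _) (by simp)
  mul_one a := ext' (mul_one _) (by simp)
  inv_mul_cancel a := ext' (by
      show a.M⁻¹ * a.M = 1
      exact Matrix.nonsing_inv_mul a.M (isUnit_iff_ne_zero.mpr (ne_of_gt a.hdet)))
    (by
      show Matrix.vecMul (-(Matrix.vecMul a.X a.M⁻¹)) a.M + a.X = 0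
      rw [Matrix.neg_vecMul, Matrix.vecMul_vecMul,
        Matrix.nonsing_inv_mul a.M (isUnit_iff_ne_zero.mpr (ne_of_gt a.hdet))]
      simp)

/-- Construction of an element of `G` from a matrix and a row vector; returns the
identity (never used below) when the determinant is not positive. -/
def mk' (A : Matrix (Fin 2) (Fin 2) ℚ) (X : Fin 2 → ℚ) : GQ :=
  if h : 0 < A.det then ⟨A, X, h⟩ else 1

def S : GQ := mk' !![1, 1; 0, 1] ![0, 0]
def T : GQ := mk' !![0, -1; 1, 0] ![1, 0]
def I₁ : GQ := mk' 1 ![0, 1]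
def I₂ : GQ := mk' 1 ![1, 0]
def E : GQ := 1

end GQ

open scoped Classical

namespace GQ

/-- The image of a group element in the integral group ring `ℤ[G]`. -/
noncomputable def of (γ : GQ) : MonoidAlgebra ℤ GQ := MonoidAlgebra.of ℤ GQ γ

/-- A natural number is a perfect square. -/
def Sq (k : ℕ) : Prop := ∃ e : ℕ, k = e ^ 2

/-- The Hecke element `T̂_n ∈ ℤ[G]`: the sum of `[((a/n,b/n),(0,d/n)),(X,Y)]` over all
`a,d > 0` with `ad = n²`, `0 ≤ b < d` with `gcd(a,b,d)` a perfect square, and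
`0 ≤ X,Y ≤ n−1`. -/
noncomputable def That (n : ℕ) : MonoidAlgebra ℤ GQ :=
  ∑ a ∈ (n ^ 2).divisors, ∑ b ∈ Finset.range (n ^ 2 / a),
    ∑ X ∈ Finset.range n, ∑ Y ∈ Finset.range n,
      if Sq (Nat.gcd a (Nat.gcd b (n ^ 2 / a))) then
        of (mk' !![(a : ℚ) / n, (b : ℚ) / n; 0, ((n ^ 2 / a : ℕ) : ℚ) / n] ![(X : ℚ), (Y : ℚ)])
      else 0

/-- The Hecke element `T̃_n ∈ ℤ[G]` (the explicit Hecke operator on period functions). -/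
noncomputable def Ttilde (n : ℕ) : MonoidAlgebra ℤ GQ :=
  (∑ a ∈ Finset.Icc (-(n : ℤ) ^ 2) ((n : ℤ) ^ 2), ∑ b ∈ Finset.Icc (-(n : ℤ) ^ 2) ((n : ℤ) ^ 2),
    ∑ c ∈ Finset.Icc (-(n : ℤ) ^ 2) ((n : ℤ) ^ 2), ∑ d ∈ Finset.Icc (-(n : ℤ) ^ 2) ((n : ℤ) ^ 2),
      ∑ X ∈ Finset.range n, ∑ Y ∈ Finset.range n,
        if a * d - b * c = (n : ℤ) ^ 2 ∧ Sq (Int.gcd a (Int.gcd b (Int.gcd c d))) ∧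
            a > c ∧ c > 0 ∧ d > -b ∧ -b > 0 then
          of (mk' !![(a : ℚ) / n, (b : ℚ) / n; (c : ℚ) / n, (d : ℚ) / n] ![(X : ℚ), (Y : ℚ)]) +
            of (mk' !![(a : ℚ) / n, -(b : ℚ) / n; -(c : ℚ) / n, (d : ℚ) / n] ![(X : ℚ), (Y : ℚ)])
        else 0) +
  (∑ a ∈ (n ^ 2).divisors, ∑ b ∈ Finset.Icc (-((n ^ 2 / a : ℕ) : ℤ)) ((n ^ 2 / a : ℕ) : ℤ),
    ∑ X ∈ Finset.range n, ∑ Y ∈ Finset.range n,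
      if -((n ^ 2 / a : ℕ) : ℤ) < 2 * b ∧ 2 * b ≤ ((n ^ 2 / a : ℕ) : ℤ) ∧
          Sq (Int.gcd (a : ℤ) (Int.gcd b ((n ^ 2 / a : ℕ) : ℤ))) then
        of (mk' !![(a : ℚ) / n, (b : ℚ) / n; 0, ((n ^ 2 / a : ℕ) : ℚ) / n] ![(X : ℚ), (Y : ℚ)])
      else 0) +
  (∑ a ∈ (n ^ 2).divisors, ∑ c ∈ Finset.Icc (-(a : ℤ)) (a : ℤ),
    ∑ X ∈ Finset.range n, ∑ Y ∈ Finset.range n,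
      if -(a : ℤ) < 2 * c ∧ 2 * c ≤ (a : ℤ) ∧ c ≠ 0 ∧
          Sq (Int.gcd (a : ℤ) (Int.gcd c ((n ^ 2 / a : ℕ) : ℤ))) then
        of (mk' !![(a : ℚ) / n, 0; (c : ℚ) / n, ((n ^ 2 / a : ℕ) : ℚ) / n] ![(X : ℚ), (Y : ℚ)])
      else 0)

/-- The right ideal `(S−E)·ℤ[G] + (I₁−E)·ℤ[G] + (I₂−E)·ℤ[G]`. -/
def heckeIdeal : Set (MonoidAlgebra ℤ GQ) :=
  {w | ∃ x y z : MonoidAlgebra ℤ GQ,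
    w = (of S - of E) * x + (of I₁ - of E) * y + (of I₂ - of E) * z}

end GQ

namespace GQ

lemma of_one : of (1 : GQ) = 1 := map_one (MonoidAlgebra.of ℤ GQ)
lemma of_E : of E = 1 := of_one
lemma of_mul (g h : GQ) : of (g * h) = of g * of h := map_mul (MonoidAlgebra.of ℤ GQ) g h

lemma hI_zero : (0 : MonoidAlgebra ℤ GQ) ∈ heckeIdeal := ⟨0, 0, 0, by simp⟩

lemma hI_add {u v : MonoidAlgebra ℤ GQ} (hu : u ∈ heckeIdeal) (hv : v ∈ heckeIdeal) :
    u + v ∈ heckeIdeal := by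
  obtain ⟨x, y, z, rfl⟩ := hu
  obtain ⟨x', y', z', rfl⟩ := hv
  exact ⟨x + x', y + y', z + z', by rw [mul_add, mul_add, mul_add]; abel⟩

lemma hI_mulr {u : MonoidAlgebra ℤ GQ} (hu : u ∈ heckeIdeal) (v : MonoidAlgebra ℤ GQ) :
    u * v ∈ heckeIdeal := by
  obtain ⟨x, y, z, rfl⟩ := hu
  exact ⟨x * v, y * v, z * v, by rw [add_mul, add_mul, mul_assoc, mul_assoc, mul_assoc]⟩

lemma hI_sum {ι : Type*} (s : Finset ι) (f : ι → MonoidAlgebra ℤ GQ)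
    (h : ∀ i ∈ s, f i ∈ heckeIdeal) : (∑ i ∈ s, f i) ∈ heckeIdeal := by
  classical
  induction s using Finset.induction_on with
  | empty => simpa using hI_zero
  | insert _ _ hx ih =>
    rw [Finset.sum_insert hx]
    exact hI_add (h _ (Finset.mem_insert_self _ _))
      (ih fun i hi => h i (Finset.mem_insert_of_mem hi))

lemma hI_sum_sub {ι : Type*} (s : Finset ι) (f g : ι → MonoidAlgebra ℤ GQ)
    (h : ∀ i ∈ s, f i - g i ∈ heckeIdeal) :
    (∑ i ∈ s, f i) - (∑ i ∈ s, g i) ∈ heckeIdeal := by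
  rw [← Finset.sum_sub_distrib]
  exact hI_sum s _ h

lemma D_S : of S - 1 ∈ heckeIdeal := ⟨1, 0, 0, by rw [of_E]; simp⟩
lemma D_I₁ : of I₁ - 1 ∈ heckeIdeal := ⟨0, 1, 0, by rw [of_E]; simp⟩
lemma D_I₂ : of I₂ - 1 ∈ heckeIdeal := ⟨0, 0, 1, by rw [of_E]; simp⟩

lemma D_mul {g h : GQ} (hg : of g - 1 ∈ heckeIdeal) (hh : of h - 1 ∈ heckeIdeal) :
    of (g * h) - 1 ∈ heckeIdeal := by
  have e : of (g * h) - 1 = (of g - 1) * of h + (of h - 1) := by rw [of_mul, sub_mul, one_mul]; abel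
  rw [e]; exact hI_add (hI_mulr hg _) hh

lemma D_inv {g : GQ} (hg : of g - 1 ∈ heckeIdeal) : of g⁻¹ - 1 ∈ heckeIdeal := by
  have e : of g⁻¹ - 1 = (of g - 1) * (-(of g⁻¹)) := by
    rw [mul_neg, sub_mul, one_mul, ← of_mul, mul_inv_cancel, of_one]; abel
  rw [e]; exact hI_mulr hg _

end GQ
namespace GQ

def transl (v : Fin 2 → ℚ) : GQ := ⟨1, v, by simp⟩

lemma transl_mul (v w : Fin 2 → ℚ) : transl v * transl w = transl (v + w) :=
  ext' (mul_one 1) (by simp [transl])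

lemma transl_zero : transl 0 = 1 := ext' rfl rfl

lemma mk'_pos {A : Matrix (Fin 2) (Fin 2) ℚ} {X : Fin 2 → ℚ} (h : 0 < A.det) :
    mk' A X = ⟨A, X, h⟩ := dif_pos h

lemma I₁_eq : I₁ = transl ![0, 1] := by
  rw [I₁, mk'_pos (by norm_num)]; rfl

lemma I₂_eq : I₂ = transl ![1, 0] := by
  rw [I₂, mk'_pos (by norm_num)]; rfl

lemma transl_inv (v : Fin 2 → ℚ) : (transl v)⁻¹ = transl (-v) := by
  symm
  apply eq_inv_of_mul_eq_one_left
  rw [transl_mul, neg_add_cancel, transl_zero]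

lemma D_transl_nat₂ (k : ℕ) : of (transl ![(k : ℚ), 0]) - 1 ∈ heckeIdeal := by
  induction k with
  | zero =>
    have e : (![(0:ℚ), 0] : Fin 2 → ℚ) = 0 := by funext i; fin_cases i <;> simp
    rw [Nat.cast_zero, e, transl_zero, of_one, sub_self]; exact hI_zero
  | succ k ih =>
    have e : transl ![((k:ℚ)+1), 0] = transl ![(k:ℚ), 0] * transl ![1, 0] := by
      rw [transl_mul]; congr 1; funext i; fin_cases i <;> simp
    push_cast
    rw [e]
    exact D_mul ih (I₂_eq ▸ D_I₂)

lemma D_transl_nat₁ (k : ℕ) : of (transl ![0, (k : ℚ)]) - 1 ∈ heckeIdeal := by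
  induction k with
  | zero =>
    have e : (![(0:ℚ), 0] : Fin 2 → ℚ) = 0 := by funext i; fin_cases i <;> simp
    rw [Nat.cast_zero, e, transl_zero, of_one, sub_self]; exact hI_zero
  | succ k ih =>
    have e : transl ![0, ((k:ℚ)+1)] = transl ![0, (k:ℚ)] * transl ![0, 1] := by
      rw [transl_mul]; congr 1; funext i; fin_cases i <;> simp
    push_cast
    rw [e]
    exact D_mul ih (I₁_eq ▸ D_I₁)

lemma D_transl_int₂ (p : ℤ) : of (transl ![(p : ℚ), 0]) - 1 ∈ heckeIdeal := by
  rcases p with k | k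
  · simpa using D_transl_nat₂ k
  · have e : (![((Int.negSucc k : ℤ) : ℚ), 0] : Fin 2 → ℚ) = -(![((k+1 : ℕ) : ℚ), 0]) := by
      funext i; fin_cases i <;> simp [Int.negSucc_eq] <;> push_cast <;> ring
    rw [e, ← transl_inv]
    exact D_inv (D_transl_nat₂ (k+1))

lemma D_transl_int₁ (q : ℤ) : of (transl ![0, (q : ℚ)]) - 1 ∈ heckeIdeal := by
  rcases q with k | k
  · simpa using D_transl_nat₁ k
  · have e : (![0, ((Int.negSucc k : ℤ) : ℚ)] : Fin 2 → ℚ) = -(![0, ((k+1 : ℕ) : ℚ)]) := by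
      funext i; fin_cases i <;> simp [Int.negSucc_eq] <;> push_cast <;> ring
    rw [e, ← transl_inv]
    exact D_inv (D_transl_nat₁ (k+1))

lemma D_transl (p q : ℤ) : of (transl ![(p : ℚ), (q : ℚ)]) - 1 ∈ heckeIdeal := by
  have e : transl ![(p : ℚ), (q : ℚ)] = transl ![(p : ℚ), 0] * transl ![0, (q : ℚ)] := by
    rw [transl_mul]; congr 1; funext i; fin_cases i <;> simp
  rw [e]
  exact D_mul (D_transl_int₂ p) (D_transl_int₁ q)

end GQ
namespace GQ

lemma sum_shift (m : ℕ) (h : ℕ → MonoidAlgebra ℤ GQ)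
    (hh : ∀ z, h (z + m) - h z ∈ heckeIdeal) :
    ∀ k, (∑ i ∈ Finset.range m, h (i + k)) - (∑ i ∈ Finset.range m, h i) ∈ heckeIdeal := by
  intro k
  induction k with
  | zero => simpa using hI_zero
  | succ k ih =>
    have h1 := Finset.sum_range_succ' (fun i => h (i + k)) m
    have h2 := Finset.sum_range_succ (fun i => h (i + k)) m
    rw [h2] at h1
    have e2 : ∀ i : ℕ, i + (k + 1) = i + 1 + k := fun i => by omega
    simp only [e2]
    have e3 : (∑ i ∈ Finset.range m, h (i + 1 + k)) =
        (∑ i ∈ Finset.range m, h (i + k)) + h (m + k) - h (0 + k) := by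
      rw [eq_sub_iff_add_eq, ← h1]
    rw [e3]
    have hmem := hI_add ih (hh k)
    have e4 : (∑ i ∈ Finset.range m, h (i + k)) + h (m + k) - h (0 + k) -
        (∑ i ∈ Finset.range m, h i) =
        ((∑ i ∈ Finset.range m, h (i + k)) - (∑ i ∈ Finset.range m, h i)) +
          (h (k + m) - h k) := by
      rw [Nat.zero_add, Nat.add_comm m k]; abel
    rw [e4]
    exact hmem

lemma sum_shift' (m : ℕ) (h : ℕ → MonoidAlgebra ℤ GQ)
    (hh : ∀ z, h (z + m) - h z ∈ heckeIdeal) (k : ℕ) :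
    (∑ i ∈ Finset.range m, h (k + i)) - (∑ i ∈ Finset.range m, h i) ∈ heckeIdeal := by
  have := sum_shift m h hh k
  simpa only [Nat.add_comm _ k] using this

lemma gcd_shift (a b d : ℕ) :
    Nat.gcd a (Nat.gcd ((a + b) % d) d) = Nat.gcd a (Nat.gcd b d) := by
  rw [← Nat.gcd_rec d (a + b)]
  rw [← Nat.gcd_assoc]
  have e : a + b = b + Nat.gcd a d * (a / Nat.gcd a d) := by
    rw [Nat.mul_div_cancel' (Nat.gcd_dvd_left a d)]; omega
  rw [e, Nat.gcd_add_mul_left_right, Nat.gcd_assoc, Nat.gcd_comm d b]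

def Melt (n a b x y : ℕ) : GQ :=
  mk' !![(a : ℚ) / n, (b : ℚ) / n; 0, ((n ^ 2 / a : ℕ) : ℚ) / n] ![(x : ℚ), (y : ℚ)]

lemma Melt_det {n a : ℕ} (hn : 0 < n) (ha : a ∣ n ^ 2) (ha0 : 0 < a) (b : ℕ) :
    (0 : ℚ) < (!![(a : ℚ) / n, (b : ℚ) / n; 0, ((n ^ 2 / a : ℕ) : ℚ) / n]).det := by
  rw [Matrix.det_fin_two_of]
  have hd0 : 0 < n ^ 2 / a := Nat.div_pos (Nat.le_of_dvd (by positivity) ha) ha0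
  have h1 : (0 : ℚ) < (a : ℚ) / n := div_pos (by exact_mod_cast ha0) (by exact_mod_cast hn)
  have h2 : (0 : ℚ) < ((n ^ 2 / a : ℕ) : ℚ) / n :=
    div_pos (by exact_mod_cast hd0) (by exact_mod_cast hn)
  simpa using mul_pos h1 h2

lemma cast_mul_div {n a : ℕ} (hn : 0 < n) (ha : a ∣ n ^ 2) :
    (a : ℚ) * ((n ^ 2 / a : ℕ) : ℚ) = (n : ℚ) ^ 2 := by
  rw [← Nat.cast_mul, Nat.mul_div_cancel' ha]; push_cast; ring

end GQ
namespace GQ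

lemma S_eq_pos : S = mk' !![1, 1; 0, 1] ![0, 0] := rfl

lemma Melt_mul_I₂ {n a : ℕ} (hn : 0 < n) (ha : a ∣ n ^ 2) (ha0 : 0 < a) {b x y : ℕ} :
    Melt n a b x y * I₂ = Melt n a b (x + 1) y := by
  rw [Melt, Melt, mk'_pos (Melt_det hn ha ha0 b), mk'_pos (Melt_det hn ha ha0 b), I₂,
    mk'_pos (by norm_num)]
  refine ext' (by simp) ?_
  show Matrix.vecMul ![(x : ℚ), (y : ℚ)] 1 + ![1, 0] = _
  rw [Matrix.vecMul_one]
  funext i; fin_cases i <;> simp <;> push_cast <;> ring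

lemma Melt_mul_I₁ {n a : ℕ} (hn : 0 < n) (ha : a ∣ n ^ 2) (ha0 : 0 < a) {b x y : ℕ} :
    Melt n a b x y * I₁ = Melt n a b x (y + 1) := by
  rw [Melt, Melt, mk'_pos (Melt_det hn ha ha0 b), mk'_pos (Melt_det hn ha ha0 b), I₁,
    mk'_pos (by norm_num)]
  refine ext' (by simp) ?_
  show Matrix.vecMul ![(x : ℚ), (y : ℚ)] 1 + ![0, 1] = _
  rw [Matrix.vecMul_one]
  funext i; fin_cases i <;> simp <;> push_cast <;> ring

lemma Melt_mul_S {n a : ℕ} (hn : 0 < n) (ha : a ∣ n ^ 2) (ha0 : 0 < a) {b x y : ℕ} :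
    Melt n a b x y * S = Melt n a (a + b) x (x + y) := by
  rw [Melt, Melt, mk'_pos (Melt_det hn ha ha0 b), mk'_pos (Melt_det hn ha ha0 (a + b)),
    S_eq_pos, mk'_pos (by norm_num [Matrix.det_fin_two_of])]
  refine ext' ?_ ?_
  · show !![(a : ℚ) / n, (b : ℚ) / n; 0, ((n ^ 2 / a : ℕ) : ℚ) / n] * !![1, 1; 0, 1] = _
    ext i j
    fin_cases i <;> fin_cases j <;>
      simp [Matrix.mul_apply, Fin.sum_univ_two] <;> push_cast <;> ring
  · show Matrix.vecMul ![(x : ℚ), (y : ℚ)] !![1, 1; 0, 1] + ![0, 0] = _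
    funext i
    fin_cases i <;>
      simp [Matrix.vecMul, dotProduct, Fin.sum_univ_two] <;> push_cast <;> ring

lemma S_mul_Melt {n a : ℕ} (hn : 0 < n) (ha : a ∣ n ^ 2) (ha0 : 0 < a) {b x y : ℕ} :
    S * Melt n a b x y = Melt n a (b + n ^ 2 / a) x y := by
  rw [Melt, Melt, mk'_pos (Melt_det hn ha ha0 b), mk'_pos (Melt_det hn ha ha0 (b + n ^ 2 / a)),
    S_eq_pos, mk'_pos (by norm_num [Matrix.det_fin_two_of])]
  refine ext' ?_ ?_
  · show !![(1:ℚ), 1; 0, 1] * !![(a : ℚ) / n, (b : ℚ) / n; 0, ((n ^ 2 / a : ℕ) : ℚ) / n] = _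
    ext i j
    fin_cases i <;> fin_cases j <;>
      simp [Matrix.mul_apply, Fin.sum_univ_two, ← add_div] <;> push_cast <;> ring
  · show Matrix.vecMul ![(0 : ℚ), 0] _ + ![(x : ℚ), (y : ℚ)] = _
    funext i
    fin_cases i <;>
      simp [Matrix.vecMul, dotProduct, Fin.sum_univ_two]

lemma transl_mul_Melt_Y {n a : ℕ} (hn : 0 < n) (ha : a ∣ n ^ 2) (ha0 : 0 < a) {b x y : ℕ} :
    transl ![0, (a : ℚ)] * Melt n a b x y = Melt n a b x (y + n) := by
  have key := cast_mul_div hn ha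
  have hn' : (n : ℚ) ≠ 0 := by exact_mod_cast hn.ne'
  rw [Melt, Melt, mk'_pos (Melt_det hn ha ha0 b), mk'_pos (Melt_det hn ha ha0 b), transl]
  refine ext' (by simp) ?_
  show Matrix.vecMul ![0, (a : ℚ)] !![(a : ℚ) / n, (b : ℚ) / n; 0, ((n ^ 2 / a : ℕ) : ℚ) / n]
      + ![(x : ℚ), (y : ℚ)] = ![(x : ℚ), ((y + n : ℕ) : ℚ)]
  funext i
  fin_cases i <;>
    simp [Matrix.vecMul, dotProduct, Fin.sum_univ_two]
  push_cast
  field_simp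
  linarith [key]

lemma transl_mul_Melt_X {n a : ℕ} (hn : 0 < n) (ha : a ∣ n ^ 2) (ha0 : 0 < a) {b x y : ℕ} :
    transl ![((n ^ 2 / a : ℕ) : ℚ), -(b : ℚ)] * Melt n a b x y = Melt n a b (x + n) y := by
  have key := cast_mul_div hn ha
  have hn' : (n : ℚ) ≠ 0 := by exact_mod_cast hn.ne'
  rw [Melt, Melt, mk'_pos (Melt_det hn ha ha0 b), mk'_pos (Melt_det hn ha ha0 b), transl]
  refine ext' (by simp) ?_
  show Matrix.vecMul ![((n ^ 2 / a : ℕ) : ℚ), -(b : ℚ)]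
        !![(a : ℚ) / n, (b : ℚ) / n; 0, ((n ^ 2 / a : ℕ) : ℚ) / n]
      + ![(x : ℚ), (y : ℚ)] = ![((x + n : ℕ) : ℚ), (y : ℚ)]
  funext i
  fin_cases i <;>
    simp [Matrix.vecMul, dotProduct, Fin.sum_univ_two]
  · push_cast
    field_simp
    linarith [key]
  · ring

end GQ
namespace GQ

lemma That_eq (n : ℕ) : That n =
    ∑ a ∈ (n ^ 2).divisors, ∑ b ∈ Finset.range (n ^ 2 / a),
      ∑ X ∈ Finset.range n, ∑ Y ∈ Finset.range n,
        if Sq (Nat.gcd a (Nat.gcd b (n ^ 2 / a))) then of (Melt n a b X Y) else 0 := rfl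

lemma That_mul_of (n : ℕ) (g : GQ) : That n * of g =
    ∑ a ∈ (n ^ 2).divisors, ∑ b ∈ Finset.range (n ^ 2 / a),
      ∑ X ∈ Finset.range n, ∑ Y ∈ Finset.range n,
        if Sq (Nat.gcd a (Nat.gcd b (n ^ 2 / a))) then of (Melt n a b X Y * g) else 0 := by
  rw [That_eq]
  simp only [Finset.sum_mul, ite_mul, zero_mul, ← of_mul]

end GQ
/-- For every positive integer `n`, the three elements `T̂_n·(S−E)`,
`T̂_n·(I₁−E)`, and `T̂_n·(I₂−E)` of `ℤ[G]` lie in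
`(S−E)·ℤ[G] + (I₁−E)·ℤ[G] + (I₂−E)·ℤ[G]`. -/
theorem GQ.That_mul_mem (n : ℕ) (hn : 0 < n) :
    GQ.That n * (GQ.of GQ.S - GQ.of GQ.E) ∈ GQ.heckeIdeal ∧
      GQ.That n * (GQ.of GQ.I₁ - GQ.of GQ.E) ∈ GQ.heckeIdeal ∧
      GQ.That n * (GQ.of GQ.I₂ - GQ.of GQ.E) ∈ GQ.heckeIdeal := by
  refine ⟨?_, ?_, ?_⟩
  · -- S case
    rw [mul_sub, of_E, mul_one, That_mul_of n S, That_eq n]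
    refine hI_sum_sub _ _ _ ?_
    intro a ha
    obtain ⟨hdvd, -⟩ := Nat.mem_divisors.mp ha
    have ha0 : 0 < a := Nat.pos_of_mem_divisors ha
    simp only [Melt_mul_S hn hdvd ha0]
    have step1 : (∑ b ∈ Finset.range (n ^ 2 / a), ∑ X ∈ Finset.range n, ∑ Y ∈ Finset.range n,
          if Sq (Nat.gcd a (Nat.gcd b (n ^ 2 / a))) then of (Melt n a (a + b) X (X + Y)) else 0)
        - (∑ b ∈ Finset.range (n ^ 2 / a), ∑ X ∈ Finset.range n, ∑ Y ∈ Finset.range n,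
          if Sq (Nat.gcd a (Nat.gcd b (n ^ 2 / a))) then of (Melt n a (a + b) X Y) else 0)
          ∈ heckeIdeal := by
      refine hI_sum_sub _ _ _ ?_
      intro b _
      refine hI_sum_sub _ _ _ ?_
      intro X _
      refine sum_shift' n (fun z =>
        if Sq (Nat.gcd a (Nat.gcd b (n ^ 2 / a))) then of (Melt n a (a + b) X z) else 0) ?_ X
      intro z
      by_cases hc : Sq (Nat.gcd a (Nat.gcd b (n ^ 2 / a)))
      · simp only [if_pos hc]
        rw [← transl_mul_Melt_Y hn hdvd ha0, of_mul, ← sub_one_mul]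
        refine hI_mulr ?_ _
        have h := D_transl 0 (a : ℤ)
        push_cast at h
        exact h
      · simp only [if_neg hc, sub_self]; exact hI_zero
    have step2 : (∑ b ∈ Finset.range (n ^ 2 / a), ∑ X ∈ Finset.range n, ∑ Y ∈ Finset.range n,
          if Sq (Nat.gcd a (Nat.gcd b (n ^ 2 / a))) then of (Melt n a (a + b) X Y) else 0)
        - (∑ b ∈ Finset.range (n ^ 2 / a), ∑ X ∈ Finset.range n, ∑ Y ∈ Finset.range n,
          if Sq (Nat.gcd a (Nat.gcd b (n ^ 2 / a))) then of (Melt n a b X Y) else 0)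
          ∈ heckeIdeal := by
      have e1 : ∀ b ∈ Finset.range (n ^ 2 / a),
          (∑ X ∈ Finset.range n, ∑ Y ∈ Finset.range n,
            if Sq (Nat.gcd a (Nat.gcd b (n ^ 2 / a))) then of (Melt n a (a + b) X Y) else 0) =
          (∑ X ∈ Finset.range n, ∑ Y ∈ Finset.range n,
            if Sq (Nat.gcd a (Nat.gcd ((a + b) % (n ^ 2 / a)) (n ^ 2 / a))) then
              of (Melt n a (a + b) X Y) else 0) := by
        intro b _
        simp only [gcd_shift a b (n ^ 2 / a)]
      have e2 : ∀ b ∈ Finset.range (n ^ 2 / a),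
          (∑ X ∈ Finset.range n, ∑ Y ∈ Finset.range n,
            if Sq (Nat.gcd a (Nat.gcd b (n ^ 2 / a))) then of (Melt n a b X Y) else 0) =
          (∑ X ∈ Finset.range n, ∑ Y ∈ Finset.range n,
            if Sq (Nat.gcd a (Nat.gcd (b % (n ^ 2 / a)) (n ^ 2 / a))) then
              of (Melt n a b X Y) else 0) := by
        intro b hb
        rw [Nat.mod_eq_of_lt (Finset.mem_range.mp hb)]
      rw [Finset.sum_congr rfl e1, Finset.sum_congr rfl e2]
      refine sum_shift' (n ^ 2 / a) (fun z => ∑ X ∈ Finset.range n, ∑ Y ∈ Finset.range n,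
        if Sq (Nat.gcd a (Nat.gcd (z % (n ^ 2 / a)) (n ^ 2 / a))) then
          of (Melt n a z X Y) else 0) ?_ a
      intro z
      refine hI_sum_sub _ _ _ ?_
      intro X _
      refine hI_sum_sub _ _ _ ?_
      intro Y _
      rw [Nat.add_mod_right]
      by_cases hc : Sq (Nat.gcd a (Nat.gcd (z % (n ^ 2 / a)) (n ^ 2 / a)))
      · simp only [if_pos hc]
        rw [← S_mul_Melt hn hdvd ha0, of_mul, ← sub_one_mul]
        exact hI_mulr D_S _
      · simp only [if_neg hc, sub_self]; exact hI_zero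
    have h := hI_add step1 step2
    rw [sub_add_sub_cancel] at h
    exact h
  · -- I₁ case
    rw [mul_sub, of_E, mul_one, That_mul_of n I₁, That_eq n]
    refine hI_sum_sub _ _ _ ?_
    intro a ha
    obtain ⟨hdvd, -⟩ := Nat.mem_divisors.mp ha
    have ha0 : 0 < a := Nat.pos_of_mem_divisors ha
    simp only [Melt_mul_I₁ hn hdvd ha0]
    refine hI_sum_sub _ _ _ ?_
    intro b _
    refine hI_sum_sub _ _ _ ?_
    intro X _
    refine sum_shift n (fun z =>
      if Sq (Nat.gcd a (Nat.gcd b (n ^ 2 / a))) then of (Melt n a b X z) else 0) ?_ 1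
    intro z
    by_cases hc : Sq (Nat.gcd a (Nat.gcd b (n ^ 2 / a)))
    · simp only [if_pos hc]
      rw [← transl_mul_Melt_Y hn hdvd ha0, of_mul, ← sub_one_mul]
      refine hI_mulr ?_ _
      have h := D_transl 0 (a : ℤ)
      push_cast at h
      exact h
    · simp only [if_neg hc, sub_self]; exact hI_zero
  · -- I₂ case
    rw [mul_sub, of_E, mul_one, That_mul_of n I₂, That_eq n]
    refine hI_sum_sub _ _ _ ?_
    intro a ha
    obtain ⟨hdvd, -⟩ := Nat.mem_divisors.mp ha
    have ha0 : 0 < a := Nat.pos_of_mem_divisors ha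
    simp only [Melt_mul_I₂ hn hdvd ha0]
    refine hI_sum_sub _ _ _ ?_
    intro b _
    refine sum_shift n (fun z => ∑ Y ∈ Finset.range n,
      if Sq (Nat.gcd a (Nat.gcd b (n ^ 2 / a))) then of (Melt n a b z Y) else 0) ?_ 1
    intro z
    refine hI_sum_sub _ _ _ ?_
    intro Y _
    by_cases hc : Sq (Nat.gcd a (Nat.gcd b (n ^ 2 / a)))
    · simp only [if_pos hc]
      rw [← transl_mul_Melt_X hn hdvd ha0, of_mul, ← sub_one_mul]
      refine hI_mulr ?_ _
      have h := D_transl ((n ^ 2 / a : ℕ) : ℤ) (-(b : ℤ))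
      push_cast at h
      exact h
    · simp only [if_neg hc, sub_self]; exact hI_zero
end

section
/- For every τ in the complex upper half-plane ℍ with v = Im τ, and each μ ∈ {0,1}: v^{-1/2} · Σ_{ℓ∈ℤ, ℓ≡μ (mod 2)} β(πℓ²v) · e^{-πiℓ²τ/2} = ((1+i)/(16π)) · ∫_{-conj(τ)}^{i∞} (t+τ)^{-3/2} · ϑ_μ(t) dt, where the integral is taken along the vertical ray t = -conj(τ) + is, s ∈ [0,∞), and (t+τ)^{-3/2} is the principal branch of the complex power (note t+τ lies on the positive imaginary axis along this ray). -/
open Complex UpperHalfPlane MeasureTheory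

/-- `β(x) := (1/(16π)) ∫_1^∞ u^{-3/2} e^{-xu} du`. -/
noncomputable def betaInt (x : ℝ) : ℝ :=
  (1 / (16 * Real.pi)) * ∫ u in Set.Ioi (1 : ℝ), u ^ (-(3 / 2 : ℝ)) * Real.exp (-x * u)

/-- The theta series `ϑ_μ(t) := Σ_{r∈ℤ, r≡μ (mod 2)} e^{πir²t/2}`. -/
noncomputable def theta (μ : ℤ) (t : ℂ) : ℂ :=
  ∑' r : ℤ, if Int.ModEq 2 r μ then Complex.exp (Real.pi * Complex.I * (r : ℂ) ^ 2 * t / 2)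
    else 0

namespace Stmt19Aux

open Set Real

local notation "ℂI" => Complex.I

lemma shift_preimage (a : ℝ) : (· + a) ⁻¹' (Ioi a) = Ioi (0 : ℝ) := by
  ext x; simp [mem_Ioi]

lemma shift_integral (a : ℝ) (g : ℝ → ℝ) :
    ∫ s in Ioi (0 : ℝ), g (s + a) = ∫ t in Ioi a, g t := by
  have h := (measurePreserving_add_right (volume : Measure ℝ) a).setIntegral_preimage_emb
    (measurableEmbedding_addRight a) g (Ioi a)
  rwa [shift_preimage] at h

lemma shift_integrableOn {a : ℝ} {g : ℝ → ℝ} (h : IntegrableOn g (Ioi a)) :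
    IntegrableOn (fun s => g (s + a)) (Ioi 0) := by
  have hmap : Measure.map (· + a) (volume.restrict (Ioi (0 : ℝ))) = volume.restrict (Ioi a) := by
    rw [← shift_preimage a, ← Measure.restrict_map (measurable_add_const a) measurableSet_Ioi,
      (measurePreserving_add_right (volume : Measure ℝ) a).map_eq]
  rw [IntegrableOn, ← hmap] at h
  exact (measurableEmbedding_addRight a).integrable_map_iff.mp h

lemma integrableOn_aux {x : ℝ} (hx : 0 ≤ x) {a : ℝ} (ha : 0 < a) :
    IntegrableOn (fun u : ℝ => u ^ (-(3 / 2 : ℝ)) * Real.exp (-x * u)) (Ioi a) := by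
  have h1 : IntegrableOn (fun u : ℝ => u ^ (-(3 / 2 : ℝ))) (Ioi a) :=
    integrableOn_Ioi_rpow_of_lt (by norm_num) ha
  refine h1.mono' ?_ ?_
  · exact ((measurable_id.pow_const _).mul
      ((measurable_id.const_mul (-x)).exp)).aestronglyMeasurable
  · refine (ae_restrict_iff' measurableSet_Ioi).2 (ae_of_all _ fun u hu => ?_)
    have hu0 : 0 < u := ha.trans hu
    have he : Real.exp (-x * u) ≤ 1 := by
      rw [Real.exp_le_one_iff]
      nlinarith
    have h0 : 0 ≤ u ^ (-(3 / 2 : ℝ)) := Real.rpow_nonneg hu0.le _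
    rw [Real.norm_eq_abs, _root_.abs_of_nonneg (mul_nonneg h0 (Real.exp_pos _).le)]
    nlinarith [Real.exp_pos (-x * u)]

lemma key_real {v c : ℝ} (hv : 0 < v) (hc : 0 ≤ c) :
    ∫ s in Ioi (0 : ℝ), (2 * v + s) ^ (-(3 / 2 : ℝ)) * Real.exp (-(c * (2 * v + s)))
      = (2 * v) ^ (-(1 / 2 : ℝ)) *
        ∫ u in Ioi (1 : ℝ), u ^ (-(3 / 2 : ℝ)) * Real.exp (-(2 * v * c) * u) := by
  have h2v : (0 : ℝ) < 2 * v := by linarith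
  have h1 : ∫ s in Ioi (0 : ℝ), (2 * v + s) ^ (-(3 / 2 : ℝ)) * Real.exp (-(c * (2 * v + s)))
      = ∫ t in Ioi (2 * v), t ^ (-(3 / 2 : ℝ)) * Real.exp (-(c * t)) := by
    rw [← shift_integral (2 * v) (fun t => t ^ (-(3 / 2 : ℝ)) * Real.exp (-(c * t)))]
    refine setIntegral_congr_fun measurableSet_Ioi fun s _ => ?_
    simp only [add_comm]
  rw [h1]
  have h2 := integral_comp_mul_left_Ioi
    (fun t => t ^ (-(3 / 2 : ℝ)) * Real.exp (-(c * t))) 1 h2v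
  rw [mul_one] at h2
  have h3 : ∫ t in Ioi (2 * v), t ^ (-(3 / 2 : ℝ)) * Real.exp (-(c * t))
      = (2 * v) * ∫ x in Ioi (1 : ℝ), (2 * v * x) ^ (-(3 / 2 : ℝ))
          * Real.exp (-(c * (2 * v * x))) := by
    rw [h2, smul_eq_mul, ← mul_assoc, mul_inv_cancel₀ h2v.ne', one_mul]
  rw [h3]
  have h4 : ∀ x ∈ Ioi (1 : ℝ), (2 * v * x) ^ (-(3 / 2 : ℝ)) * Real.exp (-(c * (2 * v * x)))
      = (2 * v) ^ (-(3 / 2 : ℝ)) * (x ^ (-(3 / 2 : ℝ)) * Real.exp (-(2 * v * c) * x)) := by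
    intro x hx
    have hx0 : (0 : ℝ) < x := lt_trans one_pos hx
    rw [Real.mul_rpow h2v.le hx0.le]
    ring_nf
  rw [setIntegral_congr_fun measurableSet_Ioi h4, MeasureTheory.integral_const_mul, ← mul_assoc]
  congr 1
  have h5 : (2 * v) * (2 * v) ^ (-(3 / 2 : ℝ)) = (2 * v) ^ (1 + -(3 / 2 : ℝ)) := by
    rw [Real.rpow_add h2v, Real.rpow_one]
  rw [h5]; norm_num

lemma cpow_I_mul {y : ℝ} (hy : 0 < y) :
    ((y : ℂ) * Complex.I) ^ (-(3 / 2 : ℂ))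
      = ((y ^ (-(3 / 2 : ℝ)) : ℝ) : ℂ) * Complex.exp ((-(3 * π / 4) : ℝ) * Complex.I) := by
  have hz : (y : ℂ) * Complex.I ≠ 0 := by simp [Complex.ext_iff, hy.ne']
  have hlog : Complex.log ((y : ℂ) * Complex.I) = (Real.log y : ℂ) + (π / 2 : ℝ) * Complex.I := by
    apply Complex.ext
    · simp [Complex.log_re, Complex.norm_real, abs_of_pos hy]
    · simp [Complex.log_im, Complex.arg_real_mul _ hy, Complex.arg_I]
  rw [Complex.cpow_def_of_ne_zero hz, hlog]
  rw [show ((Real.log y : ℂ) + (π / 2 : ℝ) * Complex.I) * (-(3 / 2 : ℂ))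
      = ((-(3 / 2) * Real.log y : ℝ) : ℂ) + ((-(3 * π / 4) : ℝ) : ℂ) * Complex.I by push_cast; ring]
  rw [Complex.exp_add, Real.rpow_def_of_pos hy, ← Complex.ofReal_exp]
  ring_nf

lemma const_eval : (1 + Complex.I) / (16 * (π : ℂ)) * (Complex.exp ((-(3 * π / 4) : ℝ) * Complex.I) * Complex.I)
    = ((Real.sqrt 2 / (16 * π) : ℝ) : ℂ) := by
  have h : Complex.exp ((-(3 * π / 4) : ℝ) * Complex.I) = -(Real.sqrt 2 / 2) * (1 + Complex.I) := by
    rw [Complex.exp_mul_I, ← Complex.ofReal_cos, ← Complex.ofReal_sin]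
    have hc : Real.cos (-(3 * π / 4)) = -(Real.sqrt 2 / 2) := by
      rw [Real.cos_neg, show (3 * π / 4 : ℝ) = π - π / 4 by ring, Real.cos_pi_sub,
        Real.cos_pi_div_four]
    have hs : Real.sin (-(3 * π / 4)) = -(Real.sqrt 2 / 2) := by
      rw [Real.sin_neg, show (3 * π / 4 : ℝ) = π - π / 4 by ring, Real.sin_pi_sub,
        Real.sin_pi_div_four]
    rw [hc, hs]; push_cast; ring
  rw [h]
  have hpi : (π : ℂ) ≠ 0 := by exact_mod_cast Real.pi_ne_zero
  have h2 : (Real.sqrt 2 : ℂ) * Real.sqrt 2 = 2 := by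
    rw [← Complex.ofReal_mul, Real.mul_self_sqrt (by norm_num)]; norm_num
  have h3 : (1 + Complex.I) * (-((Real.sqrt 2 : ℂ) / 2) * (1 + Complex.I) * Complex.I)
      = (Real.sqrt 2 : ℂ) := by
    linear_combination (-((Real.sqrt 2 : ℂ) / 2) * (2 + Complex.I)) * Complex.I_sq
  rw [div_mul_eq_mul_div, h3]
  push_cast
  ring


noncomputable def gfun (v : ℝ) (r : ℤ) (s : ℝ) : ℝ :=
  (2 * v + s) ^ (-(3 / 2 : ℝ)) * Real.exp (-(π * (r : ℝ) ^ 2 / 2 * (2 * v + s)))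

noncomputable def cconst (τ : ℍ) (r : ℤ) : ℂ :=
  Complex.exp (-(π * Complex.I * (r : ℂ) ^ 2 * (τ : ℂ) / 2)) *
    Complex.exp ((-(3 * π / 4) : ℝ) * Complex.I) * Complex.I

noncomputable def Ffun (τ : ℍ) (μ : ℤ) (r : ℤ) (s : ℝ) : ℂ :=
  ((-(starRingEnd ℂ) (τ : ℂ) + Complex.I * (s : ℂ) + (τ : ℂ)) ^ (-(3 / 2 : ℂ))) *
    (if Int.ModEq 2 r μ then
      Complex.exp (π * Complex.I * (r : ℂ) ^ 2 *
        (-(starRingEnd ℂ) (τ : ℂ) + Complex.I * (s : ℂ)) / 2)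
      else 0) * Complex.I

lemma sub_conj_eq (τ : ℍ) : (τ : ℂ) - (starRingEnd ℂ) (τ : ℂ) = ((2 * τ.im : ℝ) : ℂ) * Complex.I := by
  rw [Complex.sub_conj]
  norm_num [UpperHalfPlane.coe_im]

lemma Ffun_eq (τ : ℍ) (μ : ℤ) (r : ℤ) {s : ℝ} (hs : 0 < s) :
    Ffun τ μ r s = if Int.ModEq 2 r μ then cconst τ r * ((gfun τ.im r s : ℝ) : ℂ) else 0 := by
  have hv : 0 < τ.im := τ.im_pos
  by_cases hc : Int.ModEq 2 r μ
  · simp only [Ffun, cconst, gfun, hc, if_true]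
    have hy : (0 : ℝ) < 2 * τ.im + s := by linarith
    have hsub := sub_conj_eq τ
    have hbase : -(starRingEnd ℂ) (τ : ℂ) + Complex.I * (s : ℂ) + (τ : ℂ)
        = ((2 * τ.im + s : ℝ) : ℂ) * Complex.I := by
      push_cast at hsub ⊢
      linear_combination hsub
    have harg : π * Complex.I * (r : ℂ) ^ 2 *
          (-(starRingEnd ℂ) (τ : ℂ) + Complex.I * (s : ℂ)) / 2
        = -(π * Complex.I * (r : ℂ) ^ 2 * (τ : ℂ) / 2)
          + ((-(π * (r : ℝ) ^ 2 / 2 * (2 * τ.im + s)) : ℝ) : ℂ) := by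
      push_cast at hsub ⊢
      linear_combination (π * Complex.I * (r : ℂ) ^ 2 / 2) * hsub
        + (π * (r : ℂ) ^ 2 * (2 * (τ.im : ℂ) + (s : ℂ)) / 2) * Complex.I_sq
    rw [hbase, cpow_I_mul hy, harg, Complex.exp_add, ← Complex.ofReal_exp]
    push_cast
    ring
  · simp [Ffun, hc]

lemma gfun_integrableOn (τ : ℍ) (r : ℤ) : IntegrableOn (gfun τ.im r) (Ioi (0 : ℝ)) := by
  have hv : 0 < τ.im := τ.im_pos
  have h1 : IntegrableOn
      (fun t : ℝ => t ^ (-(3 / 2 : ℝ)) * Real.exp (-(π * (r : ℝ) ^ 2 / 2) * t))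
      (Ioi (2 * τ.im)) := integrableOn_aux (by positivity) (by linarith)
  have h2 := shift_integrableOn h1
  refine h2.congr_fun (fun s _ => ?_) measurableSet_Ioi
  simp only [gfun]
  rw [add_comm s (2 * τ.im), neg_mul]

lemma gfun_integral (τ : ℍ) (r : ℤ) :
    ∫ s in Ioi (0 : ℝ), gfun τ.im r s
      = (2 * τ.im) ^ (-(1 / 2 : ℝ)) *
        ∫ u in Ioi (1 : ℝ), u ^ (-(3 / 2 : ℝ)) * Real.exp (-(π * (r : ℝ) ^ 2 * τ.im) * u) := by
  have hv : 0 < τ.im := τ.im_pos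
  have h := key_real (v := τ.im) (c := π * (r : ℝ) ^ 2 / 2) hv (by positivity)
  have harg : 2 * τ.im * (π * (r : ℝ) ^ 2 / 2) = π * (r : ℝ) ^ 2 * τ.im := by ring
  rw [harg] at h
  simpa only [gfun] using h

lemma Ffun_integrableOn (τ : ℍ) (μ : ℤ) (r : ℤ) : IntegrableOn (Ffun τ μ r) (Ioi (0 : ℝ)) := by
  have : IntegrableOn
      (fun s : ℝ => if Int.ModEq 2 r μ then cconst τ r * ((gfun τ.im r s : ℝ) : ℂ) else 0)
      (Ioi (0 : ℝ)) := by
    by_cases hc : Int.ModEq 2 r μ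
    · simpa [hc, IntegrableOn] using ((gfun_integrableOn τ r).ofReal (𝕜 := ℂ)).const_mul (cconst τ r)
    · simpa [hc] using (integrable_zero _ _ _ : Integrable (fun _ : ℝ => (0 : ℂ))
        (volume.restrict (Ioi (0 : ℝ))))
  exact this.congr_fun (fun s hs => (Ffun_eq τ μ r hs).symm) measurableSet_Ioi

lemma norm_cconst (τ : ℍ) (r : ℤ) :
    ‖cconst τ r‖ = Real.exp (π * (r : ℝ) ^ 2 * τ.im / 2) := by
  have h1 : -(π * Complex.I * (r : ℂ) ^ 2 * (τ : ℂ) / 2)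
      = ((π * (r : ℝ) ^ 2 / 2 : ℝ) : ℂ) * -(Complex.I * (τ : ℂ)) := by push_cast; ring
  rw [cconst, norm_mul, norm_mul,
    Complex.norm_exp, Complex.norm_I, h1]
  rw [Complex.re_ofReal_mul]
  have h2 : (-(Complex.I * (τ : ℂ))).re = τ.im := by
    simp [Complex.mul_re, UpperHalfPlane.coe_im]
  rw [h2]
  have h3 : ‖Complex.exp (((-(3 * π / 4) : ℝ) : ℂ) * Complex.I)‖ = 1 :=
    Complex.norm_exp_ofReal_mul_I _
  rw [h3]
  ring_nf

lemma summable_exp_sq {a : ℝ} (ha : 0 < a) :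
    Summable fun n : ℤ => Real.exp (-(a * (n : ℝ) ^ 2)) := by
  have hgeo : Summable fun n : ℕ => Real.exp (-a) ^ n :=
    summable_geometric_of_lt_one (Real.exp_pos _).le
      (Real.exp_lt_one_iff.mpr (by linarith))
  have key : ∀ n : ℕ, Real.exp (-(a * (n : ℝ) ^ 2)) ≤ Real.exp (-a) ^ n := by
    intro n
    rw [← Real.exp_nat_mul]
    apply Real.exp_le_exp.mpr
    have : (n : ℝ) ≤ (n : ℝ) ^ 2 := by
      rcases Nat.eq_zero_or_pos n with h | h
      · simp [h]
      · have h1 : (1 : ℝ) ≤ (n : ℝ) := by exact_mod_cast h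
        nlinarith
    nlinarith
  apply Summable.of_nat_of_neg
  · exact Summable.of_nonneg_of_le (fun n => (Real.exp_pos _).le) key hgeo
  · refine Summable.of_nonneg_of_le (fun n => (Real.exp_pos _).le) (fun n => ?_) hgeo
    have : ((-(n : ℤ) : ℤ) : ℝ) ^ 2 = (n : ℝ) ^ 2 := by push_cast; ring
    rw [this]
    exact key n

lemma Ffun_summable (τ : ℍ) (μ : ℤ) :
    Summable fun r : ℤ => ∫ s in Ioi (0 : ℝ), ‖Ffun τ μ r s‖ := by
  have hv : 0 < τ.im := τ.im_pos
  -- integrable bound function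
  have hKint : IntegrableOn (fun s : ℝ => (2 * τ.im + s) ^ (-(3 / 2 : ℝ))) (Ioi (0 : ℝ)) := by
    have h1 : IntegrableOn (fun t : ℝ => t ^ (-(3 / 2 : ℝ))) (Ioi (2 * τ.im)) :=
      integrableOn_Ioi_rpow_of_lt (by norm_num) (by linarith)
    have h2 := shift_integrableOn h1
    refine h2.congr_fun (fun s _ => ?_) measurableSet_Ioi
    dsimp only; rw [add_comm s (2 * τ.im)]
  set K : ℝ := ∫ s in Ioi (0 : ℝ), (2 * τ.im + s) ^ (-(3 / 2 : ℝ)) with hK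
  have hbound : ∀ r : ℤ, ∫ s in Ioi (0 : ℝ), ‖Ffun τ μ r s‖
      ≤ K * Real.exp (-(π * τ.im / 2 * (r : ℝ) ^ 2)) := by
    intro r
    have hptwise : ∀ s ∈ Ioi (0 : ℝ), ‖Ffun τ μ r s‖
        ≤ (2 * τ.im + s) ^ (-(3 / 2 : ℝ)) * Real.exp (-(π * τ.im / 2 * (r : ℝ) ^ 2)) := by
      intro s hs
      have hs0 : (0 : ℝ) < s := hs
      rw [Ffun_eq τ μ r hs0]
      by_cases hc : Int.ModEq 2 r μ
      · simp only [hc, if_true]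
        rw [norm_mul, norm_cconst, Complex.norm_real, Real.norm_eq_abs]
        have hg0 : 0 ≤ gfun τ.im r s := by
          apply mul_nonneg (Real.rpow_nonneg (by linarith) _) (Real.exp_pos _).le
        rw [_root_.abs_of_nonneg hg0, gfun]
        rw [show Real.exp (π * (r : ℝ) ^ 2 * τ.im / 2) *
              ((2 * τ.im + s) ^ (-(3 / 2 : ℝ)) *
                Real.exp (-(π * (r : ℝ) ^ 2 / 2 * (2 * τ.im + s))))
            = (2 * τ.im + s) ^ (-(3 / 2 : ℝ)) *
              Real.exp (π * (r : ℝ) ^ 2 * τ.im / 2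
                + -(π * (r : ℝ) ^ 2 / 2 * (2 * τ.im + s))) by
          rw [Real.exp_add]; ring]
        apply mul_le_mul_of_nonneg_left _ (Real.rpow_nonneg (by linarith) _)
        apply Real.exp_le_exp.mpr
        nlinarith [mul_nonneg (mul_nonneg Real.pi_pos.le (sq_nonneg (r : ℝ))) hs0.le]
      · simp only [hc, if_false, norm_zero]
        positivity
    have hmono := setIntegral_mono_on ((Ffun_integrableOn τ μ r).norm)
      (hKint.mul_const (Real.exp (-(π * τ.im / 2 * (r : ℝ) ^ 2)))) measurableSet_Ioi hptwise
    calc ∫ s in Ioi (0 : ℝ), ‖Ffun τ μ r s‖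
        ≤ ∫ s in Ioi (0 : ℝ), (2 * τ.im + s) ^ (-(3 / 2 : ℝ)) *
            Real.exp (-(π * τ.im / 2 * (r : ℝ) ^ 2)) := hmono
      _ = K * Real.exp (-(π * τ.im / 2 * (r : ℝ) ^ 2)) := by
          rw [MeasureTheory.integral_mul_const]
  have hsum : Summable fun r : ℤ => K * Real.exp (-(π * τ.im / 2 * (r : ℝ) ^ 2)) :=
    (summable_exp_sq (a := π * τ.im / 2) (by positivity)).mul_left K
  exact Summable.of_nonneg_of_le
    (fun r => integral_nonneg fun s => norm_nonneg _) hbound hsum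

lemma Ffun_integral (τ : ℍ) (μ : ℤ) (r : ℤ) (hc : Int.ModEq 2 r μ) :
    ∫ s in Ioi (0 : ℝ), Ffun τ μ r s
      = cconst τ r * (((2 * τ.im) ^ (-(1 / 2 : ℝ)) *
          ∫ u in Ioi (1 : ℝ), u ^ (-(3 / 2 : ℝ)) * Real.exp (-(π * (r : ℝ) ^ 2 * τ.im) * u)
          : ℝ) : ℂ) := by
  rw [setIntegral_congr_fun measurableSet_Ioi (fun s hs => Ffun_eq τ μ r hs)]
  simp only [hc, if_true]
  rw [MeasureTheory.integral_const_mul, ← gfun_integral τ r]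
  congr 1
  exact integral_ofReal (𝕜 := ℂ)

lemma term_eq (τ : ℍ) (μ r : ℤ) :
    ((τ.im ^ (-(1 / 2 : ℝ)) : ℝ) : ℂ) *
      (if Int.ModEq 2 r μ then
        ((betaInt (π * (r : ℝ) ^ 2 * τ.im) : ℝ) : ℂ) *
          Complex.exp (-(π * Complex.I * (r : ℂ) ^ 2 * (τ : ℂ) / 2))
        else 0)
    = ((1 + Complex.I) / (16 * π)) * ∫ s in Ioi (0 : ℝ), Ffun τ μ r s := by
  have hv : 0 < τ.im := τ.im_pos
  by_cases hc : Int.ModEq 2 r μ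
  · rw [if_pos hc, Stmt19Aux.Ffun_integral τ μ r hc, betaInt, Stmt19Aux.cconst]
    set J : ℝ := ∫ u in Ioi (1 : ℝ), u ^ (-(3 / 2 : ℝ)) * Real.exp (-(π * (r : ℝ) ^ 2 * τ.im) * u)
      with hJ
    set E : ℂ := Complex.exp (-(π * Complex.I * (r : ℂ) ^ 2 * (τ : ℂ) / 2)) with hE
    have hC := const_eval
    have hreal : Real.sqrt 2 * (2 * τ.im) ^ (-(1 / 2 : ℝ)) = τ.im ^ (-(1 / 2 : ℝ)) := by
      rw [Real.sqrt_eq_rpow, Real.mul_rpow (by norm_num) hv.le, ← mul_assoc,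
        ← Real.rpow_add two_pos]
      norm_num
    have h2vc : (Real.sqrt 2 : ℂ) * (((2 * τ.im) ^ (-(1 / 2 : ℝ)) : ℝ) : ℂ)
        = ((τ.im ^ (-(1 / 2 : ℝ)) : ℝ) : ℂ) := by
      rw [← Complex.ofReal_mul, hreal]
    push_cast at hC h2vc ⊢
    linear_combination (-(E * (J : ℂ) * (((2 * τ.im) ^ (-(1 / 2 : ℝ)) : ℝ) : ℂ))) * hC
      + (-(E * (J : ℂ)) / (16 * (π : ℂ))) * h2vc
  · simp [Ffun, hc]

end Stmt19Aux

/-- for every `τ ∈ ℍ` with `v = Im τ` and each `μ ∈ {0,1}`,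
`v^{-1/2}·Σ_{ℓ≡μ (2)} β(πℓ²v)·e^{-πiℓ²τ/2}
  = ((1+i)/(16π))·∫_{-conj(τ)}^{i∞} (t+τ)^{-3/2}·ϑ_μ(t) dt`,
the integral being taken along the vertical ray `t = -conj(τ) + is`, `s ∈ [0,∞)`,
with the principal branch of the complex power. -/
theorem nonholomorphic_part_eq_period_integral (τ : ℍ) (μ : ℤ) (hμ : μ = 0 ∨ μ = 1) :
    ((τ.im ^ (-(1 / 2 : ℝ)) : ℝ) : ℂ) *
      ∑' ℓ : ℤ, (if Int.ModEq 2 ℓ μ then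
        ((betaInt (Real.pi * (ℓ : ℝ) ^ 2 * τ.im) : ℝ) : ℂ) *
          Complex.exp (-(Real.pi * Complex.I * (ℓ : ℂ) ^ 2 * (τ : ℂ) / 2))
        else 0) =
    ((1 + Complex.I) / (16 * Real.pi)) *
      ∫ s in Set.Ioi (0 : ℝ),
        ((-(starRingEnd ℂ) (τ : ℂ) + Complex.I * (s : ℂ) + (τ : ℂ)) ^ (-(3 / 2 : ℂ))) *
          theta μ (-(starRingEnd ℂ) (τ : ℂ) + Complex.I * (s : ℂ)) * Complex.I := by
  classical
  have hv : 0 < τ.im := τ.im_pos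
  have h_itg : ∀ s : ℝ,
      ((-(starRingEnd ℂ) (τ : ℂ) + Complex.I * (s : ℂ) + (τ : ℂ)) ^ (-(3 / 2 : ℂ))) *
          theta μ (-(starRingEnd ℂ) (τ : ℂ) + Complex.I * (s : ℂ)) * Complex.I
        = ∑' r : ℤ, Stmt19Aux.Ffun τ μ r s := by
    intro s
    rw [theta, ← tsum_mul_left, ← tsum_mul_right]
    rfl
  have hswap := integral_tsum_of_summable_integral_norm
    (fun r => Stmt19Aux.Ffun_integrableOn τ μ r) (Stmt19Aux.Ffun_summable τ μ)
  rw [setIntegral_congr_fun measurableSet_Ioi (fun s _ => h_itg s), ← hswap,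
    ← tsum_mul_left, ← tsum_mul_left]
  exact tsum_congr fun r => Stmt19Aux.term_eq τ μ r
end
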